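/- arXiv:1503.03467 — 6 statements merged into one kernel-verified Lean document; each statement's English description precedes it below -/
import Mathlib

section
/- Let b ∈ ℝ^n, let x := A⁻¹b be the solution of Ax = b, and let y := Φx. Then for every index i ∈ {1,…,n}, |(x − Ψy)ᵢ| ≤ (K^Φ_{i,i})^{1/2} · (bᵀQ⁻¹b)^{1/2}, where K^Φ := K − ΨΦK. -/
open Matrix

lemma psd_cauchy {n : ℕ} {N : Matrix (Fin n) (Fin n) ℝ} (hN : N.PosSemidef)
    (u v : Fin n → ℝ) :
    |u ⬝ᵥ N *ᵥ v| ≤ Real.sqrt (u ⬝ᵥ N *ᵥ u) * Real.sqrt (v ⬝ᵥ N *ᵥ v) := by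
  have hNt : Nᵀ = N := by
    have := hN.isHermitian.eq
    simpa using this
  have hsym : ∀ a c : Fin n → ℝ, a ⬝ᵥ N *ᵥ c = c ⬝ᵥ N *ᵥ a := by
    intro a c
    rw [dotProduct_mulVec, ← mulVec_transpose, hNt, dotProduct_comm]
  have hpos : ∀ w : Fin n → ℝ, 0 ≤ w ⬝ᵥ N *ᵥ w := by
    intro w
    simpa using hN.dotProduct_mulVec_nonneg w
  have key : ∀ t : ℝ, 0 ≤ (v ⬝ᵥ N *ᵥ v) * (t * t) + (2 * (u ⬝ᵥ N *ᵥ v)) * t + u ⬝ᵥ N *ᵥ u := by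
    intro t
    have h := hpos (t • v + u)
    have expand : (t • v + u) ⬝ᵥ N *ᵥ (t • v + u)
        = (v ⬝ᵥ N *ᵥ v) * (t * t) + (2 * (u ⬝ᵥ N *ᵥ v)) * t + u ⬝ᵥ N *ᵥ u := by
      simp only [mulVec_add, mulVec_smul, dotProduct_add, add_dotProduct,
        dotProduct_smul, smul_dotProduct, smul_eq_mul, hsym v u]
      ring
    linarith [expand ▸ h]
  have hd := discrim_le_zero key
  rw [discrim] at hd
  have hsq : (u ⬝ᵥ N *ᵥ v) ^ 2 ≤ (u ⬝ᵥ N *ᵥ u) * (v ⬝ᵥ N *ᵥ v) := by nlinarith [hd]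
  calc |u ⬝ᵥ N *ᵥ v| = Real.sqrt ((u ⬝ᵥ N *ᵥ v) ^ 2) := (Real.sqrt_sq_eq_abs _).symm
    _ ≤ Real.sqrt ((u ⬝ᵥ N *ᵥ u) * (v ⬝ᵥ N *ᵥ v)) := Real.sqrt_le_sqrt hsq
    _ = _ := Real.sqrt_mul (hpos u) _

lemma posdef_conj {p q : ℕ} {Q : Matrix (Fin q) (Fin q) ℝ} (hQ : Q.PosDef)
    (B : Matrix (Fin p) (Fin q) ℝ) (hB : Function.Injective Bᵀ.mulVec) :
    (B * Q * Bᵀ).PosDef := by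
  rw [posDef_iff_dotProduct_mulVec]
  constructor
  · have := (hQ.posSemidef.mul_mul_conjTranspose_same B).1
    simpa using this
  · intro v hv
    have hv' : Bᵀ *ᵥ v ≠ 0 := by
      intro h
      exact hv (hB (by simpa using h))
    have h2 := hQ.dotProduct_mulVec_pos hv'
    have heq : v ⬝ᵥ (B * Q * Bᵀ) *ᵥ v = (Bᵀ *ᵥ v) ⬝ᵥ Q *ᵥ (Bᵀ *ᵥ v) := by
      rw [Matrix.mul_assoc, ← mulVec_mulVec, dotProduct_mulVec, ← mulVec_transpose,
        ← mulVec_mulVec]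
    simpa [heq] using h2

/-- Pointwise error bound: with `x = A⁻¹b`, `y = Φx`, for every `i`,
`|(x − Ψy)ᵢ| ≤ (K^Φ_{i,i})^{1/2} (bᵀQ⁻¹b)^{1/2}` where `K^Φ = K − ΨΦK`. -/
theorem pointwise_error_bound_by_conditional_variance
    (n m : ℕ) (hm0 : 0 < m) (hmn : m < n)
    (A : Matrix (Fin n) (Fin n) ℝ) (hA : IsUnit A)
    (Q : Matrix (Fin n) (Fin n) ℝ) (hQ : Q.PosDef)
    (K : Matrix (Fin n) (Fin n) ℝ) (hK : K = A⁻¹ * Q * (A⁻¹)ᵀ)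
    (Φ : Matrix (Fin m) (Fin n) ℝ) (hΦ : Φ.rank = m)
    (Ψ : Matrix (Fin n) (Fin m) ℝ)
    (hΨ : Ψ = K * Φᵀ * (Φ * K * Φᵀ)⁻¹)
    (b : Fin n → ℝ) (x : Fin n → ℝ) (hx : x = A⁻¹.mulVec b)
    (y : Fin m → ℝ) (hy : y = Φ.mulVec x) :
    ∀ i : Fin n,
      |(x - Ψ.mulVec y) i| ≤
        Real.sqrt ((K - Ψ * Φ * K) i i) * Real.sqrt (b ⬝ᵥ Q⁻¹.mulVec b) := by
  intro i
  have hdv : ∀ {p : ℕ} (N : Matrix (Fin p) (Fin p) ℝ) (a c : Fin p → ℝ),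
      (N *ᵥ a) ⬝ᵥ c = a ⬝ᵥ (Nᵀ *ᵥ c) := by
    intro p N a c
    rw [dotProduct_comm, dotProduct_mulVec, ← mulVec_transpose, dotProduct_comm]
  -- units
  have hdA : IsUnit A.det := (Matrix.isUnit_iff_isUnit_det A).mp hA
  have hdAt : IsUnit Aᵀ.det := by rwa [Matrix.det_transpose]
  have hAtinv : IsUnit (A⁻¹)ᵀ := by
    rw [Matrix.transpose_nonsing_inv, Matrix.isUnit_nonsing_inv_iff,
      Matrix.isUnit_iff_isUnit_det]
    exact hdAt
  -- K is positive definite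
  have hKpd : K.PosDef := by
    rw [hK]
    exact posdef_conj hQ A⁻¹ (mulVec_injective_iff_isUnit.mpr hAtinv)
  have hKt : Kᵀ = K := by simpa using hKpd.isHermitian.eq
  have hdK : IsUnit K.det := (Matrix.isUnit_iff_isUnit_det K).mp hKpd.isUnit
  -- Φᵀ has injective mulVec
  have hΦind : LinearIndependent ℝ (fun j => Φ j) := by
    rw [linearIndependent_iff_card_eq_finrank_span, Fintype.card_fin, Set.finrank]
    exact hΦ.symm.trans (rank_eq_finrank_span_row Φ)
  have hΦinj : Function.Injective Φᵀ.mulVec := by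
    have h := vecMul_injective_iff.mpr hΦind
    intro a c hac
    apply h
    have e : ∀ w, Φᵀ *ᵥ w = w ᵥ* Φ := fun w => mulVec_transpose Φ w
    show a ᵥ* Φ = c ᵥ* Φ
    rw [← e, ← e]; exact hac
  -- S = Φ K Φᵀ is positive definite
  have hSpd : (Φ * K * Φᵀ).PosDef := posdef_conj hKpd Φ hΦinj
  have hdS : IsUnit (Φ * K * Φᵀ).det := (Matrix.isUnit_iff_isUnit_det _).mp hSpd.isUnit
  set V : Matrix (Fin n) (Fin m) ℝ := Φᵀ * (Φ * K * Φᵀ)⁻¹ with hV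
  set M : Matrix (Fin n) (Fin n) ℝ := K - K * (V * (Φ * K)) with hMdef
  have hMeq : K - Ψ * Φ * K = M := by
    rw [hΨ, hMdef, hV]
    simp only [Matrix.mul_assoc]
  -- key cancellation : Φ * (K * V) = 1
  have hVK : Φ * (K * V) = 1 := by
    rw [hV, ← Matrix.mul_assoc, ← Matrix.mul_assoc]
    exact Matrix.mul_nonsing_inv _ hdS
  have hVK' : ∀ (X : Matrix (Fin m) (Fin n) ℝ), Φ * (K * (V * X)) = X := by
    intro X
    calc Φ * (K * (V * X)) = (Φ * (K * V)) * X := by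
          simp only [Matrix.mul_assoc]
      _ = X := by rw [hVK, Matrix.one_mul]
  have hKG : K * K⁻¹ = 1 := Matrix.mul_nonsing_inv _ hdK
  -- M * K⁻¹ = 1 - K * (V * Φ)
  have hMG : M * K⁻¹ = 1 - K * (V * Φ) := by
    rw [hMdef, Matrix.sub_mul]
    simp only [Matrix.mul_assoc, hKG, Matrix.mul_one]
  -- M K⁻¹ M = M
  have hMKM : M * K⁻¹ * M = M := by
    rw [hMG, hMdef, Matrix.sub_mul, Matrix.one_mul, Matrix.mul_sub]
    have e1 : K * (V * Φ) * K = K * (V * (Φ * K)) := by simp only [Matrix.mul_assoc]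
    have e2 : K * (V * Φ) * (K * (V * (Φ * K))) = K * (V * (Φ * K)) := by
      calc K * (V * Φ) * (K * (V * (Φ * K)))
          = K * (V * (Φ * (K * (V * (Φ * K))))) := by simp only [Matrix.mul_assoc]
        _ = K * (V * (Φ * K)) := by rw [hVK' (Φ * K)]
    rw [e1, e2]
    abel
  -- M symmetric
  have hMt : Mᵀ = M := by
    rw [hMdef, hV]
    simp only [Matrix.transpose_sub, Matrix.transpose_mul, Matrix.transpose_transpose,
      Matrix.transpose_nonsing_inv, hKt, Matrix.mul_assoc]
  set u : Fin n → ℝ := Pi.single i 1 with hu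
  have hΨΦ : Ψ * Φ = K * (V * Φ) := by
    rw [hΨ, hV]; simp only [Matrix.mul_assoc]
  -- component formula
  have h1 : (x - Ψ.mulVec y) i = (M *ᵥ u) ⬝ᵥ (K⁻¹ *ᵥ x) := by
    have e : (M *ᵥ u) ⬝ᵥ (K⁻¹ *ᵥ x) = u ⬝ᵥ ((M * K⁻¹) *ᵥ x) := by
      rw [hdv, hMt, mulVec_mulVec]
    rw [e, hMG, Matrix.sub_mulVec, Matrix.one_mulVec, hy, mulVec_mulVec, ← hΨΦ]
    simp [hu, single_dotProduct]
  have h2 : (M *ᵥ u) ⬝ᵥ (K⁻¹ *ᵥ (M *ᵥ u)) = M i i := by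
    rw [hdv, hMt, mulVec_mulVec, mulVec_mulVec, hMKM]
    simp [hu, single_dotProduct, mulVec_single]
  have hKinv : K⁻¹ = Aᵀ * (Q⁻¹ * A) := by
    rw [hK, Matrix.mul_inv_rev, Matrix.mul_inv_rev, Matrix.transpose_nonsing_inv,
      Matrix.nonsing_inv_nonsing_inv _ hdAt, Matrix.nonsing_inv_nonsing_inv _ hdA]
  have hAx : A *ᵥ x = b := by
    rw [hx, mulVec_mulVec, Matrix.mul_nonsing_inv _ hdA, Matrix.one_mulVec]
  have h3 : x ⬝ᵥ (K⁻¹ *ᵥ x) = b ⬝ᵥ Q⁻¹ *ᵥ b := by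
    rw [hKinv, ← mulVec_mulVec, ← hdv, hAx, ← mulVec_mulVec, hAx]
  rw [hMeq]
  calc |(x - Ψ *ᵥ y) i| = |(M *ᵥ u) ⬝ᵥ (K⁻¹ *ᵥ x)| := by rw [h1]
    _ ≤ Real.sqrt ((M *ᵥ u) ⬝ᵥ (K⁻¹ *ᵥ (M *ᵥ u))) * Real.sqrt (x ⬝ᵥ (K⁻¹ *ᵥ x)) :=
        psd_cauchy hKpd.inv.posSemidef _ _
    _ = _ := by rw [h2, h3]
end

section
/- Let b ∈ ℝ^n, x := A⁻¹b, y := Φx. Then for every n×n real symmetric positive definite matrix B, (inf_{v ∈ ℝ^n, v≠0} √(vᵀBv / vᵀAv)) · min_{z ∈ ℝ^m} ‖b − Φᵀz‖_{B⁻¹} ≤ ‖x − Ψy‖_A ≤ (sup_{v ∈ ℝ^n, v≠0} √(vᵀBv / vᵀAv)) · min_{z ∈ ℝ^m} ‖b − Φᵀz‖_{B⁻¹} (the transfer property: once a good measurement matrix Φ has been identified for B, the same Φ can be used for A at the cost of these multiplicative factors). -/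
open Matrix

/-- The norm `‖v‖_M := (vᵀ M v)^{1/2}` induced by a symmetric positive definite matrix `M`. -/
noncomputable def mnorm {n : ℕ} (M : Matrix (Fin n) (Fin n) ℝ) (v : Fin n → ℝ) : ℝ :=
  Real.sqrt (v ⬝ᵥ M.mulVec v)

section Helpers

variable {k n m : ℕ}

lemma dot_symm {M : Matrix (Fin k) (Fin k) ℝ} (hM : M.IsHermitian) (x y : Fin k → ℝ) :
    x ⬝ᵥ M *ᵥ y = y ⬝ᵥ M *ᵥ x := by
  rw [Matrix.dotProduct_mulVec, ← Matrix.mulVec_transpose, dotProduct_comm]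
  congr 1
  rw [show Mᵀ = M from by rw [← Matrix.conjTranspose_eq_transpose_of_trivial]; exact hM]

lemma quad_pos {M : Matrix (Fin k) (Fin k) ℝ} (hM : M.PosDef) {v : Fin k → ℝ} (hv : v ≠ 0) :
    0 < v ⬝ᵥ M *ᵥ v := by simpa using hM.dotProduct_mulVec_pos hv

lemma quad_nonneg {M : Matrix (Fin k) (Fin k) ℝ} (hM : M.PosSemidef) (v : Fin k → ℝ) :
    0 ≤ v ⬝ᵥ M *ᵥ v := by simpa using hM.dotProduct_mulVec_nonneg v

lemma cauchy_schwarz {M : Matrix (Fin k) (Fin k) ℝ} (hM : M.PosSemidef) (x y : Fin k → ℝ) :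
    (x ⬝ᵥ M *ᵥ y)^2 ≤ (x ⬝ᵥ M *ᵥ x) * (y ⬝ᵥ M *ᵥ y) := by
  have key : ∀ t : ℝ, 0 ≤ (y ⬝ᵥ M *ᵥ y) * (t*t) + (2 * (x ⬝ᵥ M *ᵥ y)) * t + (x ⬝ᵥ M *ᵥ x) := by
    intro t
    have h := quad_nonneg hM (x + t • y)
    have hsym := dot_symm hM.1 x y
    simp only [dotProduct_add, add_dotProduct, Matrix.mulVec_add, Matrix.mulVec_smul,
      dotProduct_smul, smul_dotProduct, smul_eq_mul] at h
    rw [← hsym] at h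
    nlinarith [h]
  have := discrim_le_zero key
  simp only [discrim] at this
  nlinarith [this]

lemma quad_cont (M : Matrix (Fin k) (Fin k) ℝ) :
    Continuous fun v : Fin k → ℝ => v ⬝ᵥ M *ᵥ v := by
  simp only [dotProduct, Matrix.mulVec, dotProduct]
  exact continuous_finset_sum _ fun i _ => (continuous_apply i).mul
    (continuous_finset_sum _ fun j _ => continuous_const.mul (continuous_apply j))

lemma quad_smul (M : Matrix (Fin k) (Fin k) ℝ) (c : ℝ) (v : Fin k → ℝ) :
    (c • v) ⬝ᵥ M *ᵥ (c • v) = c^2 * (v ⬝ᵥ M *ᵥ v) := by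
  rw [Matrix.mulVec_smul, smul_dotProduct, dotProduct_smul]
  simp [smul_eq_mul]; ring

lemma ratio_bddAbove (A B : Matrix (Fin k) (Fin k) ℝ) (hA : A.PosDef) :
    BddAbove {r : ℝ | ∃ v : Fin k → ℝ, v ≠ 0 ∧
      r = Real.sqrt ((v ⬝ᵥ B *ᵥ v) / (v ⬝ᵥ A *ᵥ v))} := by
  set f : (Fin k → ℝ) → ℝ := fun v => Real.sqrt ((v ⬝ᵥ B *ᵥ v) / (v ⬝ᵥ A *ᵥ v)) with hf
  have hcont : ContinuousOn f (Metric.sphere (0 : Fin k → ℝ) 1) := by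
    apply Real.continuous_sqrt.comp_continuousOn
    apply ContinuousOn.div (quad_cont B).continuousOn (quad_cont A).continuousOn
    intro v hv
    have hv0 : v ≠ 0 := by
      intro h
      rw [h] at hv
      simp at hv
    exact (quad_pos hA hv0).ne'
  have hcomp : IsCompact (f '' Metric.sphere (0 : Fin k → ℝ) 1) :=
    (isCompact_sphere 0 1).image_of_continuousOn hcont
  refine hcomp.bddAbove.mono ?_
  rintro r ⟨v, hv, rfl⟩
  have hnv : ‖v‖ ≠ 0 := norm_ne_zero_iff.mpr hv
  refine ⟨‖v‖⁻¹ • v, ?_, ?_⟩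
  · simp [norm_smul, abs_of_nonneg (inv_nonneg.mpr (norm_nonneg v)), inv_mul_cancel₀ hnv]
  · have hc2 : (‖v‖⁻¹)^2 ≠ 0 := pow_ne_zero _ (inv_ne_zero hnv)
    simp only [hf, quad_smul, mul_div_mul_left _ _ hc2]

lemma transpose_mulVec_injective (Φ : Matrix (Fin m) (Fin n) ℝ) (hΦ : Φ.rank = m) :
    Function.Injective (Φᵀ.mulVec) := by
  have h1 : Φᵀ.rank = m := by rw [Matrix.rank_transpose, hΦ]
  have h2 : Module.finrank ℝ (LinearMap.range Φᵀ.mulVecLin) = m := h1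
  have h3 := LinearMap.finrank_range_add_finrank_ker Φᵀ.mulVecLin
  rw [h2, Module.finrank_pi] at h3
  have h4 : Module.finrank ℝ (LinearMap.ker Φᵀ.mulVecLin) = 0 := by
    simpa using h3
  have h5 : LinearMap.ker Φᵀ.mulVecLin = ⊥ := Submodule.finrank_eq_zero.mp h4
  have h6 := LinearMap.ker_eq_bot.mp h5
  intro a b hab
  exact h6 (show Φᵀ.mulVecLin a = Φᵀ.mulVecLin b by
    rwa [Matrix.mulVecLin_apply, Matrix.mulVecLin_apply])

lemma gram_posDef (A : Matrix (Fin n) (Fin n) ℝ) (hA : A.PosDef)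
    (Φ : Matrix (Fin m) (Fin n) ℝ) (hinj : Function.Injective (Φᵀ.mulVec)) :
    (Φ * A⁻¹ * Φᵀ).PosDef := by
  have hΦH : Φᴴ = Φᵀ := by ext i j; simp
  refine Matrix.PosDef.of_dotProduct_mulVec_pos ?_ ?_
  · have := (hA.inv.posSemidef.mul_mul_conjTranspose_same Φ).1
    rwa [hΦH] at this
  · intro z hz
    have hzz : Φᵀ *ᵥ z ≠ 0 := by
      intro h
      exact hz (hinj (by simpa using h))
    have : z ⬝ᵥ (Φ * A⁻¹ * Φᵀ) *ᵥ z = (Φᵀ *ᵥ z) ⬝ᵥ A⁻¹ *ᵥ (Φᵀ *ᵥ z) := by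
      rw [← Matrix.mulVec_mulVec, ← Matrix.mulVec_mulVec,
        Matrix.dotProduct_mulVec z Φ, ← Matrix.mulVec_transpose]
    simpa [this] using quad_pos hA.inv hzz

end Helpers

/-- Transfer property: with `x = A⁻¹b`, `y = Φx` and `Q = A`, for every
SPD matrix `B`,
`inf_v √(vᵀBv/vᵀAv) · min_z ‖b − Φᵀz‖_{B⁻¹} ≤ ‖x − Ψy‖_A ≤ sup_v √(vᵀBv/vᵀAv) · min_z ‖b − Φᵀz‖_{B⁻¹}`. -/
theorem transfer_property
    (n m : ℕ) (hm0 : 0 < m) (hmn : m < n)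
    (A : Matrix (Fin n) (Fin n) ℝ) (hA : A.PosDef)
    (Φ : Matrix (Fin m) (Fin n) ℝ) (hΦ : Φ.rank = m)
    (Ψ : Matrix (Fin n) (Fin m) ℝ)
    (hΨ : Ψ = A⁻¹ * Φᵀ * (Φ * A⁻¹ * Φᵀ)⁻¹)
    (b : Fin n → ℝ) (x : Fin n → ℝ) (hx : x = A⁻¹.mulVec b)
    (y : Fin m → ℝ) (hy : y = Φ.mulVec x)
    (B : Matrix (Fin n) (Fin n) ℝ) (hB : B.PosDef) :
    sInf {r : ℝ | ∃ v : Fin n → ℝ, v ≠ 0 ∧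
          r = Real.sqrt ((v ⬝ᵥ B.mulVec v) / (v ⬝ᵥ A.mulVec v))} *
        sInf {r : ℝ | ∃ z : Fin m → ℝ, r = mnorm B⁻¹ (b - Φᵀ.mulVec z)} ≤
      mnorm A (x - Ψ.mulVec y) ∧
    mnorm A (x - Ψ.mulVec y) ≤
      sSup {r : ℝ | ∃ v : Fin n → ℝ, v ≠ 0 ∧
          r = Real.sqrt ((v ⬝ᵥ B.mulVec v) / (v ⬝ᵥ A.mulVec v))} *
        sInf {r : ℝ | ∃ z : Fin m → ℝ, r = mnorm B⁻¹ (b - Φᵀ.mulVec z)} := by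
  have hn0 : 0 < n := hm0.trans hmn
  have hinj : Function.Injective (Φᵀ.mulVec) := transpose_mulVec_injective Φ hΦ
  have hG : (Φ * A⁻¹ * Φᵀ).PosDef := gram_posDef A hA Φ hinj
  set G := Φ * A⁻¹ * Φᵀ with hGdef
  have hGdet : IsUnit G.det := (Matrix.isUnit_iff_isUnit_det G).mp hG.isUnit
  have hGG : G * G⁻¹ = 1 := Matrix.mul_nonsing_inv _ hGdet
  have hAdet : IsUnit A.det := (Matrix.isUnit_iff_isUnit_det A).mp hA.isUnit
  have hAA : A * A⁻¹ = 1 := Matrix.mul_nonsing_inv _ hAdet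
  have hBdet : IsUnit B.det := (Matrix.isUnit_iff_isUnit_det B).mp hB.isUnit
  have hBB : B * B⁻¹ = 1 := Matrix.mul_nonsing_inv _ hBdet
  set z₀ : Fin m → ℝ := G⁻¹ *ᵥ (Φ *ᵥ (A⁻¹ *ᵥ b)) with hz₀
  set u₀ : Fin n → ℝ := b - Φᵀ *ᵥ z₀ with hu₀
  -- quadratic identities
  have hquadA : ∀ u : Fin n → ℝ, (A⁻¹ *ᵥ u) ⬝ᵥ A *ᵥ (A⁻¹ *ᵥ u) = u ⬝ᵥ A⁻¹ *ᵥ u := by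
    intro u
    rw [Matrix.mulVec_mulVec, hAA, Matrix.one_mulVec, dotProduct_comm]
  have hquadB : ∀ u : Fin n → ℝ, (B⁻¹ *ᵥ u) ⬝ᵥ B *ᵥ (B⁻¹ *ᵥ u) = u ⬝ᵥ B⁻¹ *ᵥ u := by
    intro u
    rw [Matrix.mulVec_mulVec, hBB, Matrix.one_mulVec, dotProduct_comm]
  -- (a) the residual
  have ha : x - Ψ.mulVec y = A⁻¹ *ᵥ u₀ := by
    rw [hΨ, hy, hx, hu₀, hz₀]
    rw [Matrix.mulVec_sub]
    congr 1
    rw [← Matrix.mulVec_mulVec, ← Matrix.mulVec_mulVec]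
  -- (b) norm identity
  have hb' : mnorm A (x - Ψ.mulVec y) = mnorm A⁻¹ u₀ := by
    rw [ha]; unfold mnorm; rw [hquadA]
  -- (c) orthogonality
  have hc : Φ *ᵥ (A⁻¹ *ᵥ u₀) = 0 := by
    have key : G *ᵥ (G⁻¹ *ᵥ (Φ *ᵥ (A⁻¹ *ᵥ b))) = Φ *ᵥ (A⁻¹ *ᵥ b) := by
      rw [Matrix.mulVec_mulVec, hGG, Matrix.one_mulVec]
    have h1 : Φ *ᵥ (A⁻¹ *ᵥ (Φᵀ *ᵥ z₀)) = G *ᵥ z₀ := by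
      rw [Matrix.mulVec_mulVec, Matrix.mulVec_mulVec, hGdef, Matrix.mul_assoc]
    rw [hu₀, Matrix.mulVec_sub, Matrix.mulVec_sub, h1, hz₀, key, sub_self]
  -- cross term
  have hcross : ∀ d : Fin m → ℝ, u₀ ⬝ᵥ A⁻¹ *ᵥ (Φᵀ *ᵥ d) = 0 := by
    intro d
    have hAiT : (A⁻¹)ᵀ = A⁻¹ := by
      have := hA.inv.1
      rw [show (A⁻¹)ᵀ = (A⁻¹)ᴴ from by ext i j; simp, this]
    rw [Matrix.mulVec_mulVec, Matrix.dotProduct_mulVec, ← Matrix.mulVec_transpose,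
      Matrix.transpose_mul, hAiT, ← Matrix.mulVec_mulVec, Matrix.transpose_transpose, hc]
    simp
  -- (d) minimality
  have hmin : ∀ z : Fin m → ℝ,
      u₀ ⬝ᵥ A⁻¹ *ᵥ u₀ ≤ (b - Φᵀ *ᵥ z) ⬝ᵥ A⁻¹ *ᵥ (b - Φᵀ *ᵥ z) := by
    intro z
    have hdecomp : b - Φᵀ *ᵥ z = u₀ + Φᵀ *ᵥ (z₀ - z) := by
      rw [Matrix.mulVec_sub, hu₀]; abel
    rw [hdecomp]
    simp only [dotProduct_add, add_dotProduct, Matrix.mulVec_add]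
    have h1 := hcross (z₀ - z)
    have h2 : (Φᵀ *ᵥ (z₀ - z)) ⬝ᵥ A⁻¹ *ᵥ u₀ = u₀ ⬝ᵥ A⁻¹ *ᵥ (Φᵀ *ᵥ (z₀ - z)) :=
      dot_symm hA.inv.1 _ _
    have h3 := quad_nonneg hA.inv.posSemidef (Φᵀ *ᵥ (z₀ - z))
    linarith
  -- aux inequalities
  have hupper_aux : ∀ u : Fin n → ℝ, u ≠ 0 → ∃ v : Fin n → ℝ, v ≠ 0 ∧
      mnorm A⁻¹ u ≤ Real.sqrt ((v ⬝ᵥ B.mulVec v) / (v ⬝ᵥ A.mulVec v)) * mnorm B⁻¹ u := by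
    intro u hu
    have hposAi : 0 < u ⬝ᵥ A⁻¹ *ᵥ u := quad_pos hA.inv hu
    refine ⟨A⁻¹ *ᵥ u, ?_, ?_⟩
    · intro h
      rw [show u ⬝ᵥ A⁻¹ *ᵥ u = u ⬝ᵥ (0 : Fin n → ℝ) from by rw [h]] at hposAi
      simp at hposAi
    · have hq : (A⁻¹ *ᵥ u) ⬝ᵥ A *ᵥ (A⁻¹ *ᵥ u) = u ⬝ᵥ A⁻¹ *ᵥ u := hquadA u
      have hcs : (u ⬝ᵥ A⁻¹ *ᵥ u)^2 ≤
          ((A⁻¹ *ᵥ u) ⬝ᵥ B *ᵥ (A⁻¹ *ᵥ u)) * (u ⬝ᵥ B⁻¹ *ᵥ u) := by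
        have h := cauchy_schwarz hB.posSemidef (A⁻¹ *ᵥ u) (B⁻¹ *ᵥ u)
        have h1 : (A⁻¹ *ᵥ u) ⬝ᵥ B *ᵥ (B⁻¹ *ᵥ u) = u ⬝ᵥ A⁻¹ *ᵥ u := by
          rw [Matrix.mulVec_mulVec, hBB, Matrix.one_mulVec, dotProduct_comm]
        rw [h1, hquadB u] at h
        exact h
      unfold mnorm
      rw [← Real.sqrt_mul (div_nonneg (quad_nonneg hB.posSemidef _) (hq ▸ hposAi.le))]
      apply Real.sqrt_le_sqrt
      rw [hq, div_mul_eq_mul_div, le_div_iff₀ hposAi]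
      nlinarith [hcs]
  have hlower_aux : ∀ u : Fin n → ℝ, u ≠ 0 → ∃ v : Fin n → ℝ, v ≠ 0 ∧
      Real.sqrt ((v ⬝ᵥ B.mulVec v) / (v ⬝ᵥ A.mulVec v)) * mnorm B⁻¹ u ≤ mnorm A⁻¹ u := by
    intro u hu
    have hposBi : 0 < u ⬝ᵥ B⁻¹ *ᵥ u := quad_pos hB.inv hu
    have hw0 : B⁻¹ *ᵥ u ≠ 0 := by
      intro h
      rw [show u ⬝ᵥ B⁻¹ *ᵥ u = u ⬝ᵥ (0 : Fin n → ℝ) from by rw [h]] at hposBi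
      simp at hposBi
    refine ⟨B⁻¹ *ᵥ u, hw0, ?_⟩
    have hposA : 0 < (B⁻¹ *ᵥ u) ⬝ᵥ A *ᵥ (B⁻¹ *ᵥ u) := quad_pos hA hw0
    have hcs : (u ⬝ᵥ B⁻¹ *ᵥ u)^2 ≤
        (u ⬝ᵥ A⁻¹ *ᵥ u) * ((B⁻¹ *ᵥ u) ⬝ᵥ A *ᵥ (B⁻¹ *ᵥ u)) := by
      have h := cauchy_schwarz hA.posSemidef (A⁻¹ *ᵥ u) (B⁻¹ *ᵥ u)
      have h1 : (A⁻¹ *ᵥ u) ⬝ᵥ A *ᵥ (B⁻¹ *ᵥ u) = u ⬝ᵥ B⁻¹ *ᵥ u := by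
        rw [dot_symm hA.1 (A⁻¹ *ᵥ u) (B⁻¹ *ᵥ u), Matrix.mulVec_mulVec, hAA,
          Matrix.one_mulVec, dotProduct_comm]
      rw [h1, hquadA u] at h
      exact h
    unfold mnorm
    rw [hquadB u, ← Real.sqrt_mul (div_nonneg hposBi.le hposA.le)]
    apply Real.sqrt_le_sqrt
    rw [div_mul_eq_mul_div, div_le_iff₀ hposA]
    nlinarith [hcs]
  -- the sets
  set S₁ : Set ℝ := {r : ℝ | ∃ v : Fin n → ℝ, v ≠ 0 ∧
      r = Real.sqrt ((v ⬝ᵥ B.mulVec v) / (v ⬝ᵥ A.mulVec v))} with hS₁def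
  set S₂ : Set ℝ := {r : ℝ | ∃ z : Fin m → ℝ, r = mnorm B⁻¹ (b - Φᵀ.mulVec z)} with hS₂def
  have hS₂ne : S₂.Nonempty := ⟨_, 0, rfl⟩
  have hones : (fun _ : Fin n => (1:ℝ)) ≠ 0 := by
    intro h
    have := congrFun h ⟨0, hn0⟩
    simp at this
  have hS₁ne : S₁.Nonempty := ⟨_, fun _ => 1, hones, rfl⟩
  have hbbS₂ : BddBelow S₂ := ⟨0, by rintro r ⟨z, rfl⟩; exact Real.sqrt_nonneg _⟩
  have hbbS₁ : BddBelow S₁ := ⟨0, by rintro r ⟨v, hv, rfl⟩; exact Real.sqrt_nonneg _⟩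
  have hbaS₁ : BddAbove S₁ := ratio_bddAbove A B hA
  have hcmin_nonneg : 0 ≤ sInf S₁ := le_csInf hS₁ne (by rintro r ⟨v, hv, rfl⟩; exact Real.sqrt_nonneg _)
  have hcmax_nonneg : 0 ≤ sSup S₁ :=
    le_trans (Real.sqrt_nonneg _) (le_csSup hbaS₁ ⟨fun _ => 1, hones, rfl⟩)
  have hu₀mem : mnorm B⁻¹ u₀ ∈ S₂ := ⟨z₀, by rw [hu₀]⟩
  rw [hb']
  constructor
  · -- lower bound
    have hstep : sInf S₁ * mnorm B⁻¹ u₀ ≤ mnorm A⁻¹ u₀ := by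
      by_cases hu : u₀ = 0
      · simp [hu, mnorm]
      · obtain ⟨v, hv, hle⟩ := hlower_aux u₀ hu
        refine le_trans ?_ hle
        exact mul_le_mul_of_nonneg_right (csInf_le hbbS₁ ⟨v, hv, rfl⟩) (Real.sqrt_nonneg _)
    calc sInf S₁ * sInf S₂ ≤ sInf S₁ * mnorm B⁻¹ u₀ :=
          mul_le_mul_of_nonneg_left (csInf_le hbbS₂ hu₀mem) hcmin_nonneg
      _ ≤ mnorm A⁻¹ u₀ := hstep
  · -- upper bound
    have h1 : ∀ r ∈ S₂, mnorm A⁻¹ u₀ ≤ sSup S₁ * r := by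
      rintro r ⟨z, rfl⟩
      have hstep : mnorm A⁻¹ u₀ ≤ mnorm A⁻¹ (b - Φᵀ *ᵥ z) := by
        unfold mnorm
        exact Real.sqrt_le_sqrt (hmin z)
      by_cases hu : b - Φᵀ *ᵥ z = 0
      · rw [hu] at hstep ⊢
        simp only [mnorm] at hstep ⊢
        simp only [Matrix.mulVec_zero, dotProduct_zero, Real.sqrt_zero, mul_zero] at hstep ⊢
        exact hstep
      · obtain ⟨v, hv, hle⟩ := hupper_aux _ hu
        refine hstep.trans (hle.trans ?_)
        exact mul_le_mul_of_nonneg_right (le_csSup hbaS₁ ⟨v, hv, rfl⟩) (Real.sqrt_nonneg _)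
    rcases hcmax_nonneg.eq_or_lt with h0 | hpos
    · have h2 := h1 _ hu₀mem
      rw [← h0, zero_mul] at h2
      rw [← h0, zero_mul]
      exact h2
    · have h2 : mnorm A⁻¹ u₀ / sSup S₁ ≤ sInf S₂ := by
        apply le_csInf hS₂ne
        intro r hr
        rw [div_le_iff₀' hpos]
        exact h1 r hr
      calc mnorm A⁻¹ u₀ = sSup S₁ * (mnorm A⁻¹ u₀ / sSup S₁) := by
            field_simp
        _ ≤ sSup S₁ * sInf S₂ := mul_le_mul_of_nonneg_left h2 hcmax_nonneg
end

section
/- Consider the worst-case recovery error E(Φ) := sup_{b ∈ ℝ^n, b ≠ 0} ( min_{z ∈ ℝ^m} ‖A^{-1/2}(b − Φᵀz)‖ ) / ‖b‖, where ‖·‖ is the Euclidean norm (by the Galerkin identity this equals sup_b ‖x − Ψy‖_A/‖b‖ for the recovery with Q = A). Then: (1) if the row space Im(Φᵀ) equals span{a₁,…,a_m}, then E(Φ) = λ_{m+1}^{-1/2}; (2) if Im(Φᵀ) is orthogonal to a₁, then E(Φ) = λ₁^{-1/2}. -/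
open Matrix

/-- The Euclidean norm of a vector. -/
noncomputable def eunorm {n : ℕ} (v : Fin n → ℝ) : ℝ :=
  Real.sqrt (v ⬝ᵥ v)

/-- The square root of a positive semidefinite matrix (Mathlib's former `Matrix.PosSemidef.sqrt`,
removed since; restored here with its old definition). -/
noncomputable def Matrix.PosSemidef.sqrt {n : Type*} [Fintype n] [DecidableEq n]
    {A : Matrix n n ℝ} (hA : A.PosSemidef) : Matrix n n ℝ :=
  hA.1.eigenvectorUnitary.1 * diagonal ((↑) ∘ (√·) ∘ hA.1.eigenvalues) *
    (star hA.1.eigenvectorUnitary : Matrix n n ℝ)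

lemma psd_sqrt_mul_self {n : Type*} [Fintype n] [DecidableEq n]
    {A : Matrix n n ℝ} (hA : A.PosSemidef) : hA.sqrt * hA.sqrt = A := by
  have hU : (star hA.1.eigenvectorUnitary : Matrix n n ℝ) * hA.1.eigenvectorUnitary.1 = 1 :=
    Unitary.star_mul_self_of_mem hA.1.eigenvectorUnitary.2
  have hspec := hA.1.spectral_theorem
  rw [Unitary.conjStarAlgAut_apply] at hspec
  refine Eq.trans ?_ hspec.symm
  simp only [Matrix.PosSemidef.sqrt]
  rw [show ∀ P Q R S T : Matrix n n ℝ, P * Q * R * (S * Q * T) = P * (Q * (R * S) * Q) * T by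
    intros; simp only [Matrix.mul_assoc]]
  rw [hU, Matrix.mul_one, Matrix.diagonal_mul_diagonal]
  congr 3
  funext i
  simp [Real.mul_self_sqrt (hA.eigenvalues_nonneg i)]

lemma psd_sqrt_transpose {n : Type*} [Fintype n] [DecidableEq n]
    {A : Matrix n n ℝ} (hA : A.PosSemidef) : hA.sqrtᵀ = hA.sqrt := by
  simp only [Matrix.PosSemidef.sqrt, Matrix.transpose_mul, Matrix.diagonal_transpose,
    Matrix.mul_assoc]
  rw [Matrix.star_eq_conjTranspose, Matrix.conjTranspose_eq_transpose_of_trivial,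
    Matrix.transpose_transpose]


lemma dot_sum_smul {n : ℕ} {ι : Type*} [Fintype ι] (f : ι → Fin n → ℝ) (d : ι → ℝ)
    (w : Fin n → ℝ) : w ⬝ᵥ (∑ j, d j • f j) = ∑ j, d j * (w ⬝ᵥ f j) := by
  simp [dotProduct, Finset.sum_apply, Finset.mul_sum]
  rw [Finset.sum_comm]
  apply Finset.sum_congr rfl
  intro j _
  apply Finset.sum_congr rfl
  intro k _
  ring

lemma expand_basis {n : ℕ} (a : Fin n → Fin n → ℝ)
    (horth : ∀ i j, a i ⬝ᵥ a j = if i = j then 1 else 0) (v : Fin n → ℝ) :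
    ∑ i, (a i ⬝ᵥ v) • a i = v := by
  classical
  set U : Matrix (Fin n) (Fin n) ℝ := Matrix.of a with hU
  have hUU : U * Uᵀ = 1 := by
    ext i j
    simpa [U, Matrix.mul_apply, dotProduct, Matrix.one_apply] using horth i j
  have hUU' : Uᵀ * U = 1 := mul_eq_one_comm.mp hUU
  have h : Uᵀ.mulVec (U.mulVec v) = v := by
    rw [Matrix.mulVec_mulVec, hUU', Matrix.one_mulVec]
  funext j
  have := congrFun h j
  simp [Matrix.mulVec, dotProduct, U, Matrix.transpose_apply] at this
  rw [← this]
  simp [Finset.sum_apply, dotProduct]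
  apply Finset.sum_congr rfl
  intro i _
  ring

lemma dot_self_eq {n : ℕ} (a : Fin n → Fin n → ℝ)
    (horth : ∀ i j, a i ⬝ᵥ a j = if i = j then 1 else 0) (v : Fin n → ℝ) :
    v ⬝ᵥ v = ∑ j, (a j ⬝ᵥ v) ^ 2 := by
  calc v ⬝ᵥ v = v ⬝ᵥ (∑ j, (a j ⬝ᵥ v) • a j) := by rw [expand_basis a horth v]
    _ = ∑ j, (a j ⬝ᵥ v) * (v ⬝ᵥ a j) := dot_sum_smul _ _ _
    _ = ∑ j, (a j ⬝ᵥ v) ^ 2 := by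
        apply Finset.sum_congr rfl; intro j _; rw [dotProduct_comm]; ring

lemma inv_quad {n : ℕ} (a : Fin n → Fin n → ℝ) (lam : Fin n → ℝ)
    (M : Matrix (Fin n) (Fin n) ℝ)
    (horth : ∀ i j, a i ⬝ᵥ a j = if i = j then 1 else 0)
    (hMa : ∀ i, M.mulVec (a i) = (lam i)⁻¹ • a i) (v : Fin n → ℝ) :
    v ⬝ᵥ M.mulVec v = ∑ j, (lam j)⁻¹ * (a j ⬝ᵥ v) ^ 2 := by
  have hMv : M.mulVec v = ∑ j, ((a j ⬝ᵥ v) * (lam j)⁻¹) • a j := by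
    conv_lhs => rw [← expand_basis a horth v]
    rw [← Matrix.mulVecLin_apply, map_sum]
    apply Finset.sum_congr rfl
    intro j _
    rw [_root_.map_smul, Matrix.mulVecLin_apply, hMa j, smul_smul]
  rw [hMv, dot_sum_smul]
  apply Finset.sum_congr rfl
  intro j _
  rw [dotProduct_comm]
  ring

lemma bnorm_sq {n : ℕ} (A : Matrix (Fin n) (Fin n) ℝ) (hA : A.PosDef) (v : Fin n → ℝ) :
    ((hA.posSemidef.sqrt)⁻¹.mulVec v) ⬝ᵥ ((hA.posSemidef.sqrt)⁻¹.mulVec v)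
      = v ⬝ᵥ A⁻¹.mulVec v := by
  set S := hA.posSemidef.sqrt with hSdef
  have hS2 : S * S = A := psd_sqrt_mul_self hA.posSemidef
  have hSt : Sᵀ = S := by
    have h : Sᴴ = S := by
      rw [Matrix.conjTranspose_eq_transpose_of_trivial]; exact psd_sqrt_transpose _
    rwa [Matrix.conjTranspose_eq_transpose_of_trivial] at h
  have hBt : (S⁻¹)ᵀ = S⁻¹ := by rw [Matrix.transpose_nonsing_inv, hSt]
  have hBB : S⁻¹ * S⁻¹ = A⁻¹ := by rw [← hS2, Matrix.mul_inv_rev]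
  rw [Matrix.dotProduct_mulVec, ← Matrix.mulVec_transpose, hBt,
    Matrix.mulVec_mulVec, hBB, dotProduct_comm]

lemma inv_eig {n : ℕ} (A : Matrix (Fin n) (Fin n) ℝ) (hA : A.PosDef)
    (a : Fin n → Fin n → ℝ) (lam : Fin n → ℝ) (hpos : ∀ i, 0 < lam i)
    (heig : ∀ i, A.mulVec (a i) = lam i • a i) (i : Fin n) :
    A⁻¹.mulVec (a i) = (lam i)⁻¹ • a i := by
  have hdet : IsUnit A.det := isUnit_iff_ne_zero.mpr hA.det_pos.ne'
  have hinv : A⁻¹ * A = 1 := Matrix.nonsing_inv_mul A hdet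
  have h : lam i • A⁻¹.mulVec (a i) = a i := by
    rw [← Matrix.mulVec_smul, ← heig i, Matrix.mulVec_mulVec, hinv, Matrix.one_mulVec]
  have := congrArg (fun w => (lam i)⁻¹ • w) h
  simpa [smul_smul, inv_mul_cancel₀ (hpos i).ne'] using this

/-- For the worst-case recovery error
`E(Φ) := sup_{b ≠ 0} (min_z ‖A^{-1/2}(b − Φᵀz)‖)/‖b‖`:
(1) if `Im(Φᵀ) = span{a₁,…,a_m}` then `E(Φ) = λ_{m+1}^{-1/2}`;
(2) if `Im(Φᵀ) ⊥ a₁` then `E(Φ) = λ₁^{-1/2}`. -/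
theorem worst_case_error_best_and_worst_measurements
    (n m : ℕ) (hm0 : 0 < m) (hmn : m < n)
    (A : Matrix (Fin n) (Fin n) ℝ) (hA : A.PosDef)
    (a : Fin n → Fin n → ℝ) (lam : Fin n → ℝ)
    (hpos : ∀ i, 0 < lam i) (hmono : Monotone lam)
    (heig : ∀ i, A.mulVec (a i) = lam i • a i)
    (horth : ∀ i j, a i ⬝ᵥ a j = if i = j then 1 else 0)
    (Φ : Matrix (Fin m) (Fin n) ℝ) (hΦ : Φ.rank = m)
    (E : ℝ)
    (hE : E = sSup {r : ℝ | ∃ b : Fin n → ℝ, b ≠ 0 ∧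
        r = sInf {s : ℝ | ∃ z : Fin m → ℝ,
              s = eunorm ((hA.posSemidef.sqrt)⁻¹.mulVec (b - Φᵀ.mulVec z))} / eunorm b}) :
    (LinearMap.range Φᵀ.mulVecLin =
        Submodule.span ℝ (Set.range fun i : Fin m => a (Fin.castLE hmn.le i)) →
      E = 1 / Real.sqrt (lam ⟨m, hmn⟩)) ∧
    ((∀ w : Fin m → ℝ, Φᵀ.mulVec w ⬝ᵥ a ⟨0, hm0.trans hmn⟩ = 0) →
      E = 1 / Real.sqrt (lam ⟨0, hm0.trans hmn⟩)) := by
  classical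
  set B := (hA.posSemidef.sqrt)⁻¹ with hBdef
  -- quadratic form identities
  have hMa : ∀ i, A⁻¹.mulVec (a i) = (lam i)⁻¹ • a i :=
    inv_eig A hA a lam hpos heig
  have hBn : ∀ v : Fin n → ℝ,
      eunorm (B.mulVec v) = Real.sqrt (∑ j, (lam j)⁻¹ * (a j ⬝ᵥ v) ^ 2) := by
    intro v
    rw [eunorm, hBdef, bnorm_sq A hA v, inv_quad a lam A⁻¹ horth hMa v]
  have hvn : ∀ v : Fin n → ℝ, eunorm v = Real.sqrt (∑ j, (a j ⬝ᵥ v) ^ 2) := by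
    intro v; rw [eunorm, dot_self_eq a horth v]
  have htermnn : ∀ (v : Fin n → ℝ) (j : Fin n), (0:ℝ) ≤ (lam j)⁻¹ * (a j ⬝ᵥ v) ^ 2 :=
    fun v j => mul_nonneg (inv_nonneg.mpr (hpos j).le) (sq_nonneg _)
  -- positivity of eunorm for nonzero vectors
  have hbpos : ∀ b : Fin n → ℝ, b ≠ 0 → 0 < eunorm b := by
    intro b hb
    apply Real.sqrt_pos.mpr
    rcases lt_or_eq_of_le (Finset.sum_nonneg fun i _ => mul_self_nonneg (b i)) with h | h
    · exact h
    · exact absurd (dotProduct_self_eq_zero.mp h.symm) hb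
  -- inner sets are nonempty and bounded below
  have hSne : ∀ b : Fin n → ℝ,
      Set.Nonempty {s : ℝ | ∃ z : Fin m → ℝ, s = eunorm (B.mulVec (b - Φᵀ.mulVec z))} :=
    fun b => ⟨_, 0, rfl⟩
  have hSbdd : ∀ b : Fin n → ℝ,
      BddBelow {s : ℝ | ∃ z : Fin m → ℝ, s = eunorm (B.mulVec (b - Φᵀ.mulVec z))} := by
    intro b
    refine ⟨0, ?_⟩
    rintro s ⟨z, rfl⟩
    exact Real.sqrt_nonneg _
  -- the generic argument
  have key : ∀ k : Fin n, (∀ z : Fin m → ℝ, a k ⬝ᵥ Φᵀ.mulVec z = 0) →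
      (∀ b : Fin n → ℝ, b ≠ 0 →
        sInf {s : ℝ | ∃ z : Fin m → ℝ, s = eunorm (B.mulVec (b - Φᵀ.mulVec z))}
          ≤ (1 / Real.sqrt (lam k)) * eunorm b) →
      E = 1 / Real.sqrt (lam k) := by
    intro k hperp hub
    have hsq : (0:ℝ) < Real.sqrt (lam k) := Real.sqrt_pos.mpr (hpos k)
    have hak1 : eunorm (a k) = 1 := by
      rw [eunorm, horth k k, if_pos rfl, Real.sqrt_one]
    have hakne : a k ≠ 0 := by
      intro h
      have := horth k k
      rw [h] at this
      simp at this
    -- value of the inner inf at b = a k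
    have hinf : sInf {s : ℝ | ∃ z : Fin m → ℝ,
        s = eunorm (B.mulVec (a k - Φᵀ.mulVec z))} = 1 / Real.sqrt (lam k) := by
      apply le_antisymm
      · -- z = 0 gives exactly the value
        have hmem : (1 / Real.sqrt (lam k)) ∈ {s : ℝ | ∃ z : Fin m → ℝ,
            s = eunorm (B.mulVec (a k - Φᵀ.mulVec z))} := by
          refine ⟨0, ?_⟩
          rw [Matrix.mulVec_zero, sub_zero, hBn]
          have hsum : ∑ j, (lam j)⁻¹ * (a j ⬝ᵥ a k) ^ 2 = (lam k)⁻¹ := by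
            rw [Finset.sum_eq_single k]
            · rw [horth k k, if_pos rfl]; ring
            · intro j _ hj
              rw [horth j k, if_neg hj]; ring
            · intro h; exact absurd (Finset.mem_univ k) h
          rw [hsum, Real.sqrt_inv, one_div]
        exact csInf_le (hSbdd _) hmem
      · apply le_csInf (hSne _)
        rintro s ⟨z, rfl⟩
        rw [hBn]
        have h1 : a k ⬝ᵥ (a k - Φᵀ.mulVec z) = 1 := by
          rw [dotProduct_sub, horth k k, if_pos rfl, hperp z, sub_zero]
        have h2 : (lam k)⁻¹ ≤ ∑ j, (lam j)⁻¹ * (a j ⬝ᵥ (a k - Φᵀ.mulVec z)) ^ 2 := by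
          have := Finset.single_le_sum
            (f := fun j => (lam j)⁻¹ * (a j ⬝ᵥ (a k - Φᵀ.mulVec z)) ^ 2)
            (fun j _ => htermnn _ j) (Finset.mem_univ k)
          simpa [h1] using this
        calc 1 / Real.sqrt (lam k) = Real.sqrt (lam k)⁻¹ := by
              rw [Real.sqrt_inv, one_div]
          _ ≤ _ := Real.sqrt_le_sqrt h2
    -- the claimed value is attained
    have hmemT : (1 / Real.sqrt (lam k)) ∈ {r : ℝ | ∃ b : Fin n → ℝ, b ≠ 0 ∧
        r = sInf {s : ℝ | ∃ z : Fin m → ℝ,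
              s = eunorm (B.mulVec (b - Φᵀ.mulVec z))} / eunorm b} := by
      exact ⟨a k, hakne, by rw [hinf, hak1, div_one]⟩
    -- every element of the set is at most the claimed value
    have hubT : ∀ r ∈ {r : ℝ | ∃ b : Fin n → ℝ, b ≠ 0 ∧
        r = sInf {s : ℝ | ∃ z : Fin m → ℝ,
              s = eunorm (B.mulVec (b - Φᵀ.mulVec z))} / eunorm b},
        r ≤ 1 / Real.sqrt (lam k) := by
      rintro r ⟨b, hb, rfl⟩
      rw [div_le_iff₀ (hbpos b hb)]
      exact hub b hb
    rw [hE]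
    exact le_antisymm (csSup_le ⟨_, hmemT⟩ hubT) (le_csSup ⟨_, hubT⟩ hmemT)
  constructor
  · -- Part 1: range Φᵀ = span of first m eigenvectors
    intro hrange
    apply key ⟨m, hmn⟩
    · -- orthogonality of the range to a_m
      intro z
      have hz : Φᵀ.mulVec z ∈
          Submodule.span ℝ (Set.range fun i : Fin m => a (Fin.castLE hmn.le i)) := by
        rw [← hrange]
        exact ⟨z, rfl⟩
      let f : (Fin n → ℝ) →ₗ[ℝ] ℝ :=
        { toFun := fun x => a ⟨m, hmn⟩ ⬝ᵥ x
          map_add' := fun x y => by simp [dotProduct_add]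
          map_smul' := fun c x => by simp [dotProduct_smul, smul_eq_mul]}
      have hle : Submodule.span ℝ (Set.range fun i : Fin m => a (Fin.castLE hmn.le i))
          ≤ LinearMap.ker f := by
        apply Submodule.span_le.mpr
        rintro x ⟨i, rfl⟩
        simp only [SetLike.mem_coe, LinearMap.mem_ker]
        show a ⟨m, hmn⟩ ⬝ᵥ a (Fin.castLE hmn.le i) = 0
        rw [horth, if_neg]
        intro h
        have h2 : (m : ℕ) = ((Fin.castLE hmn.le i : Fin n) : ℕ) := congrArg Fin.val h
        have h3 : ((Fin.castLE hmn.le i : Fin n) : ℕ) < m := i.isLt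
        omega
      exact hle hz
    · -- upper bound for each b
      intro b hb
      set c : Fin m → ℝ := fun i => a (Fin.castLE hmn.le i) ⬝ᵥ b with hc
      have hp : (∑ i : Fin m, c i • a (Fin.castLE hmn.le i))
          ∈ LinearMap.range Φᵀ.mulVecLin := by
        rw [hrange]
        exact Submodule.sum_mem _ fun i _ =>
          Submodule.smul_mem _ _ (Submodule.subset_span ⟨i, rfl⟩)
      obtain ⟨z, hz⟩ := hp
      have hz' : Φᵀ.mulVec z = ∑ i : Fin m, c i • a (Fin.castLE hmn.le i) := by
        rw [← Matrix.mulVecLin_apply]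
        exact hz
      have hd : ∀ j : Fin n, a j ⬝ᵥ (b - Φᵀ.mulVec z)
          = if (j : ℕ) < m then 0 else a j ⬝ᵥ b := by
        intro j
        rw [dotProduct_sub, hz', dot_sum_smul]
        by_cases hj : (j : ℕ) < m
        · rw [if_pos hj]
          have hsum : ∑ i : Fin m, c i * (a j ⬝ᵥ a (Fin.castLE hmn.le i)) = a j ⬝ᵥ b := by
            rw [Finset.sum_eq_single (⟨(j : ℕ), hj⟩ : Fin m)]
            · have hcast : Fin.castLE hmn.le ⟨(j : ℕ), hj⟩ = j := by
                apply Fin.ext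
                rfl
              rw [hcast, horth j j, if_pos rfl, mul_one, hc]
              simp only [hcast]
            · intro i _ hi
              rw [horth, if_neg, mul_zero]
              intro h
              apply hi
              apply Fin.ext
              exact (congrArg Fin.val h).symm
            · intro h
              exact absurd (Finset.mem_univ _) h
          rw [hsum, sub_self]
        · rw [if_neg hj]
          have hsum : ∑ i : Fin m, c i * (a j ⬝ᵥ a (Fin.castLE hmn.le i)) = 0 := by
            apply Finset.sum_eq_zero
            intro i _
            rw [horth, if_neg, mul_zero]
            intro h
            have h2 : (j : ℕ) = ((Fin.castLE hmn.le i : Fin n) : ℕ) := congrArg Fin.val h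
            have h3 : ((Fin.castLE hmn.le i : Fin n) : ℕ) < m := i.isLt
            omega
          rw [hsum, sub_zero]
      have h1 : sInf {s : ℝ | ∃ z : Fin m → ℝ, s = eunorm (B.mulVec (b - Φᵀ.mulVec z))}
          ≤ eunorm (B.mulVec (b - Φᵀ.mulVec z)) := csInf_le (hSbdd b) ⟨z, rfl⟩
      refine le_trans h1 ?_
      rw [hBn]
      have h2 : ∑ j, (lam j)⁻¹ * (a j ⬝ᵥ (b - Φᵀ.mulVec z)) ^ 2
          ≤ (lam ⟨m, hmn⟩)⁻¹ * ∑ j, (a j ⬝ᵥ b) ^ 2 := by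
        rw [Finset.mul_sum]
        apply Finset.sum_le_sum
        intro j _
        rw [hd j]
        by_cases hj : (j : ℕ) < m
        · rw [if_pos hj]
          have : (lam j)⁻¹ * (0:ℝ) ^ 2 = 0 := by ring
          rw [this]
          exact mul_nonneg (inv_nonneg.mpr (hpos _).le) (sq_nonneg _)
        · rw [if_neg hj]
          apply mul_le_mul_of_nonneg_right _ (sq_nonneg _)
          apply inv_anti₀ (hpos _)
          apply hmono
          exact le_of_not_gt hj
      calc Real.sqrt (∑ j, (lam j)⁻¹ * (a j ⬝ᵥ (b - Φᵀ.mulVec z)) ^ 2)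
          ≤ Real.sqrt ((lam ⟨m, hmn⟩)⁻¹ * ∑ j, (a j ⬝ᵥ b) ^ 2) := Real.sqrt_le_sqrt h2
        _ = (1 / Real.sqrt (lam ⟨m, hmn⟩)) * eunorm b := by
            rw [Real.sqrt_mul (inv_nonneg.mpr (hpos _).le), Real.sqrt_inv, one_div, hvn b]
  · -- Part 2: range Φᵀ orthogonal to a_0
    intro hperp0
    apply key ⟨0, hm0.trans hmn⟩
    · intro z
      rw [dotProduct_comm]
      exact hperp0 z
    · intro b hb
      have h1 : sInf {s : ℝ | ∃ z : Fin m → ℝ, s = eunorm (B.mulVec (b - Φᵀ.mulVec z))}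
          ≤ eunorm (B.mulVec (b - Φᵀ.mulVec 0)) := csInf_le (hSbdd b) ⟨0, rfl⟩
      rw [Matrix.mulVec_zero, sub_zero] at h1
      refine le_trans h1 ?_
      rw [hBn]
      have h2 : ∑ j, (lam j)⁻¹ * (a j ⬝ᵥ b) ^ 2
          ≤ (lam ⟨0, hm0.trans hmn⟩)⁻¹ * ∑ j, (a j ⬝ᵥ b) ^ 2 := by
        rw [Finset.mul_sum]
        apply Finset.sum_le_sum
        intro j _
        apply mul_le_mul_of_nonneg_right _ (sq_nonneg _)
        apply inv_anti₀ (hpos _)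
        apply hmono
        simp [Fin.le_def]
      calc Real.sqrt (∑ j, (lam j)⁻¹ * (a j ⬝ᵥ b) ^ 2)
          ≤ Real.sqrt ((lam ⟨0, hm0.trans hmn⟩)⁻¹ * ∑ j, (a j ⬝ᵥ b) ^ 2) :=
            Real.sqrt_le_sqrt h2
        _ = (1 / Real.sqrt (lam ⟨0, hm0.trans hmn⟩)) * eunorm b := by
            rw [Real.sqrt_mul (inv_nonneg.mpr (hpos _).le), Real.sqrt_inv, one_div, hvn b]
end

section
/- Define Θ' := πΘπᵀ (an I×I symmetric positive definite matrix), A := Θ⁻¹, A' := (Θ')⁻¹, and the I×J restriction matrix R := A'πΘ. Then: (i) Rπᵀ = Id_I; (ii) A' = R A Rᵀ (the coarse stiffness matrix is obtained from the fine one by restriction); (iii) for every b ∈ ℝ^I, Rᵀb is the unique minimizer of cᵀAc over all c ∈ ℝ^J satisfying πc = b. -/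
open Matrix

lemma aux_vecMul_inj {I J : Type*} [Fintype I] [Fintype J]
    (π : Matrix I J ℝ) (hπ : π.rank = Fintype.card I) :
    Function.Injective π.vecMul := by
  rw [Matrix.vecMul_injective_iff]
  apply linearIndependent_iff_card_eq_finrank_span.mpr
  rw [Matrix.rank_eq_finrank_span_row] at hπ
  exact hπ.symm

/-- With `Θ' = πΘπᵀ`, `A = Θ⁻¹`, `A' = Θ'⁻¹` and `R = A'πΘ`:
(i) `Rπᵀ = Id`; (ii) `A' = R A Rᵀ`; (iii) for every `b`, `Rᵀb` is the unique minimizer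
of `cᵀAc` subject to `πc = b`. -/
theorem nested_restriction_matrices
    {I J : Type*} [Fintype I] [Fintype J] [DecidableEq I] [DecidableEq J]
    (hcard : Fintype.card I < Fintype.card J)
    (Θ : Matrix J J ℝ) (hΘ : Θ.PosDef)
    (π : Matrix I J ℝ) (hπ : π.rank = Fintype.card I)
    (Θ' : Matrix I I ℝ) (hΘ' : Θ' = π * Θ * πᵀ)
    (A : Matrix J J ℝ) (hA : A = Θ⁻¹)
    (A' : Matrix I I ℝ) (hA' : A' = Θ'⁻¹)
    (R : Matrix I J ℝ) (hR : R = A' * π * Θ) :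
    R * πᵀ = 1 ∧
    A' = R * A * Rᵀ ∧
    ∀ b : I → ℝ,
      π.mulVec (Rᵀ.mulVec b) = b ∧
      ∀ c : J → ℝ, π.mulVec c = b → c ≠ Rᵀ.mulVec b →
        Rᵀ.mulVec b ⬝ᵥ A.mulVec (Rᵀ.mulVec b) < c ⬝ᵥ A.mulVec c := by
  have hinj : Function.Injective π.vecMul := aux_vecMul_inj π hπ
  -- Θ' is positive definite
  have hΘsym : Θᵀ = Θ := hΘ.1
  have hΘ'pd : Θ'.PosDef := by
    subst hΘ'
    refine Matrix.PosDef.of_dotProduct_mulVec_pos ?_ ?_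
    · show (π * Θ * πᵀ)ᴴ = _
      simp [Matrix.conjTranspose_mul, Matrix.conjTranspose_eq_transpose_of_trivial,
        Matrix.transpose_mul, hΘsym, Matrix.mul_assoc]
    · intro x hx
      have hxπ : x ᵥ* π ≠ 0 := fun h => hx (hinj (h.trans (Matrix.zero_vecMul π).symm))
      have key := hΘ.dotProduct_mulVec_pos hxπ
      rw [star_trivial] at key
      have e1 : star x ⬝ᵥ (π * Θ * πᵀ) *ᵥ x = (x ᵥ* π) ⬝ᵥ Θ *ᵥ (x ᵥ* π) := by
        rw [star_trivial, ← Matrix.mulVec_mulVec, ← Matrix.mulVec_mulVec,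
          Matrix.dotProduct_mulVec, Matrix.mulVec_transpose]
      rw [e1]; exact key
  have hΘ'sym : Θ'ᵀ = Θ' := hΘ'pd.1
  have hApd : A.PosDef := hA ▸ hΘ.inv
  have hA'pd : A'.PosDef := hA' ▸ hΘ'pd.inv
  have hA'sym : A'ᵀ = A' := hA'pd.1
  have hΘ'det : IsUnit Θ'.det := isUnit_iff_ne_zero.mpr hΘ'pd.det_pos.ne'
  have hΘdet : IsUnit Θ.det := isUnit_iff_ne_zero.mpr hΘ.det_pos.ne'
  -- (i)
  have h1 : R * πᵀ = 1 := by
    rw [hR, hA', Matrix.mul_assoc, Matrix.mul_assoc, ← Matrix.mul_assoc π, ← hΘ']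
    exact Matrix.nonsing_inv_mul Θ' hΘ'det
  -- Rᵀ
  have hRT : Rᵀ = Θ * πᵀ * A' := by
    rw [hR]; simp [Matrix.transpose_mul, hΘsym, hA'sym, Matrix.mul_assoc]
  -- A * Rᵀ = πᵀ * A'
  have hART : A * Rᵀ = πᵀ * A' := by
    rw [hRT, hA, ← Matrix.mul_assoc, ← Matrix.mul_assoc,
      Matrix.nonsing_inv_mul Θ hΘdet, Matrix.one_mul]
  -- (ii)
  have h2 : A' = R * A * Rᵀ := by
    rw [Matrix.mul_assoc, hART, ← Matrix.mul_assoc, h1, Matrix.one_mul]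
  refine ⟨h1, h2, fun b => ?_⟩
  have hπRT : π * Rᵀ = 1 := by
    have := congrArg Matrix.transpose h1
    simpa [Matrix.transpose_mul] using this
  have h3 : π *ᵥ (Rᵀ *ᵥ b) = b := by
    rw [Matrix.mulVec_mulVec, hπRT, Matrix.one_mulVec]
  refine ⟨h3, fun c hc hne => ?_⟩
  set m := Rᵀ *ᵥ b with hm
  set d := c - m with hd
  have hdne : d ≠ 0 := sub_ne_zero.mpr hne
  have hπd : π *ᵥ d = 0 := by
    rw [hd, Matrix.mulVec_sub, hc, h3, sub_self]
  -- cross term vanishes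
  have hcross : d ⬝ᵥ A *ᵥ m = 0 := by
    rw [hm, Matrix.mulVec_mulVec, hART, ← Matrix.mulVec_mulVec,
      Matrix.dotProduct_mulVec, Matrix.vecMul_transpose, hπd, zero_dotProduct]
  have hAsym : Aᵀ = A := hApd.1
  have hcross2 : m ⬝ᵥ A *ᵥ d = 0 := by
    rw [Matrix.dotProduct_mulVec, ← Matrix.mulVec_transpose, hAsym,
      dotProduct_comm]
    exact hcross
  have hdAd : 0 < d ⬝ᵥ A *ᵥ d := by simpa [star_trivial] using hApd.dotProduct_mulVec_pos hdne
  have hcm : c = m + d := by rw [hd]; abel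
  calc m ⬝ᵥ A *ᵥ m < m ⬝ᵥ A *ᵥ m + (m ⬝ᵥ A *ᵥ d + (d ⬝ᵥ A *ᵥ m + d ⬝ᵥ A *ᵥ d)) := by
        rw [hcross, hcross2]; linarith
    _ = c ⬝ᵥ A *ᵥ c := by
        rw [hcm, Matrix.mulVec_add, add_dotProduct, dotProduct_add,
          dotProduct_add]; ring
end

section
/- Set B := W A Wᵀ (a J×J symmetric positive definite matrix), N := −A Wᵀ B⁻¹, and P := πᵀR. Then λ_max(NᵀN) ≤ (1 + ‖P‖²_{Ker(π)}) / λ_min(W Wᵀ), where ‖P‖_{Ker(π)} := sup_{x ∈ Ker(π), x ≠ 0} |Px|/|x| and λ_max, λ_min denote the largest and smallest eigenvalues. -/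
open Matrix

section Aux

variable {m n : Type*} [Fintype m] [Fintype n]

private lemma dot_self_nonneg' (v : n → ℝ) : 0 ≤ v ⬝ᵥ v :=
  Finset.sum_nonneg fun _ _ => mul_self_nonneg _

private lemma dot_self_pos' {v : n → ℝ} (hv : v ≠ 0) : 0 < v ⬝ᵥ v :=
  lt_of_le_of_ne (dot_self_nonneg' v) fun h => hv (dotProduct_self_eq_zero.mp h.symm)

private lemma dot_cs' (u v : n → ℝ) : (u ⬝ᵥ v) ^ 2 ≤ (u ⬝ᵥ u) * (v ⬝ᵥ v) := by
  simpa only [dotProduct, pow_two] using Finset.sum_mul_sq_le_sq_mul_sq Finset.univ u v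

private lemma mulVec_dot_le' (Q : Matrix m n ℝ) (z : n → ℝ) :
    (Q *ᵥ z) ⬝ᵥ (Q *ᵥ z) ≤ (∑ i, ∑ j, (Q i j) ^ 2) * (z ⬝ᵥ z) := by
  have h : ∀ i, (Q *ᵥ z) i * (Q *ᵥ z) i ≤ (∑ j, (Q i j) ^ 2) * (z ⬝ᵥ z) := by
    intro i
    have h2 := Finset.sum_mul_sq_le_sq_mul_sq Finset.univ (Q i) z
    simpa [Matrix.mulVec, dotProduct, pow_two] using h2
  calc (Q *ᵥ z) ⬝ᵥ (Q *ᵥ z) = ∑ i, (Q *ᵥ z) i * (Q *ᵥ z) i := rfl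
    _ ≤ ∑ i, (∑ j, (Q i j) ^ 2) * (z ⬝ᵥ z) := Finset.sum_le_sum fun i _ => h i
    _ = (∑ i, ∑ j, (Q i j) ^ 2) * (z ⬝ᵥ z) := by rw [Finset.sum_mul]

private lemma transpose_mulVec_injective' {K I : Type*} [Fintype K] [Fintype I]
    (M : Matrix K I ℝ) (h : M.rank = Fintype.card K) :
    Function.Injective (Mᵀ.mulVec) := by
  have h1 : Mᵀ.rank = Fintype.card K := by rw [Matrix.rank_transpose]; exact h
  have h2 := Mᵀ.mulVecLin.finrank_range_add_finrank_ker
  rw [Module.finrank_fintype_fun_eq_card] at h2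
  have hrank : Module.finrank ℝ (LinearMap.range Mᵀ.mulVecLin) = Fintype.card K := h1
  have hker0 : Module.finrank ℝ (LinearMap.ker Mᵀ.mulVecLin) = 0 := by omega
  have hker : LinearMap.ker Mᵀ.mulVecLin = ⊥ := Submodule.finrank_eq_zero.mp hker0
  have hinj := LinearMap.ker_eq_bot.mp hker
  intro x y hxy
  exact hinj (show Mᵀ.mulVecLin x = Mᵀ.mulVecLin y by
    rw [Matrix.mulVecLin_apply, Matrix.mulVecLin_apply]; exact hxy)

private lemma sandwich_posDef' {I J : Type*} [Fintype I] [Fintype J]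
    {A : Matrix I I ℝ} (hA : A.PosDef) {M : Matrix J I ℝ}
    (hinj : Function.Injective Mᵀ.mulVec) : (M * A * Mᵀ).PosDef := by
  have hps : (M * A * Mᵀ).PosSemidef := by
    have h := hA.posSemidef.mul_mul_conjTranspose_same M
    rwa [Matrix.conjTranspose_eq_transpose_of_trivial] at h
  refine Matrix.PosDef.of_dotProduct_mulVec_pos hps.1 fun x hx => ?_
  have hx' : Mᵀ *ᵥ x ≠ 0 := fun h0 => hx (hinj (by simpa [Matrix.mulVec_zero] using h0))
  have h := hA.dotProduct_mulVec_pos hx'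
  simpa [star_trivial, ← Matrix.mulVec_mulVec, Matrix.dotProduct_mulVec,
    ← Matrix.mulVec_transpose] using h

private lemma psd_cs' {n : Type*} [Fintype n] {G : Matrix n n ℝ} (hG : G.PosSemidef)
    (u v : n → ℝ) : (u ⬝ᵥ G *ᵥ v) ^ 2 ≤ (u ⬝ᵥ G *ᵥ u) * (v ⬝ᵥ G *ᵥ v) := by
  have hsym : v ⬝ᵥ G *ᵥ u = u ⬝ᵥ G *ᵥ v := by
    rw [Matrix.dotProduct_mulVec, ← Matrix.mulVec_transpose]
    rw [show Gᵀ = G from by rw [← Matrix.conjTranspose_eq_transpose_of_trivial]; exact hG.1]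
    rw [dotProduct_comm]
  have key : ∀ t : ℝ, 0 ≤ (v ⬝ᵥ G *ᵥ v) * (t * t) + (2 * (u ⬝ᵥ G *ᵥ v)) * t + (u ⬝ᵥ G *ᵥ u) := by
    intro t
    have h := hG.dotProduct_mulVec_nonneg (u + t • v)
    simp only [star_trivial, Matrix.mulVec_add, Matrix.mulVec_smul, dotProduct_add,
      add_dotProduct, dotProduct_smul, smul_dotProduct, smul_eq_mul] at h
    rw [hsym] at h
    ring_nf at h ⊢
    linarith [h]
  have hd := discrim_le_zero key
  rw [discrim] at hd
  nlinarith [hd, hG.dotProduct_mulVec_nonneg u, hG.dotProduct_mulVec_nonneg v]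

private lemma rayleigh_lower' {J : Type*} [Fintype J] [DecidableEq J] (hne : Nonempty J)
    (G : Matrix J J ℝ) (hG : G.PosDef) :
    ∃ μ : ℝ, 0 < μ ∧ ∀ y : J → ℝ, y ≠ 0 → μ * (y ⬝ᵥ y) ≤ y ⬝ᵥ G *ᵥ y := by
  have hdet : IsUnit G.det := isUnit_iff_ne_zero.mpr hG.det_pos.ne'
  have hinv : G * G⁻¹ = 1 := Matrix.mul_nonsing_inv G hdet
  have hCnn : (0:ℝ) ≤ ∑ i, ∑ j, (G⁻¹ i j) ^ 2 :=
    Finset.sum_nonneg fun _ _ => Finset.sum_nonneg fun _ _ => sq_nonneg _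
  have hCpos : (0:ℝ) < ∑ i, ∑ j, (G⁻¹ i j) ^ 2 := by
    rcases lt_or_eq_of_le hCnn with h | h
    · exact h
    · exfalso
      have hG0 : G⁻¹ = 0 := by
        ext i j
        have h1 : (G⁻¹ i j) ^ 2 ≤ 0 := by
          calc (G⁻¹ i j) ^ 2 ≤ ∑ j, (G⁻¹ i j) ^ 2 :=
                Finset.single_le_sum (f := fun j => (G⁻¹ i j) ^ 2)
                  (fun _ _ => sq_nonneg _) (Finset.mem_univ j)
            _ ≤ ∑ i, ∑ j, (G⁻¹ i j) ^ 2 := Finset.single_le_sum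
                (f := fun i => ∑ j, (G⁻¹ i j) ^ 2)
                (fun _ _ => Finset.sum_nonneg fun _ _ => sq_nonneg _) (Finset.mem_univ i)
            _ = 0 := h.symm
        have h2 : (G⁻¹ i j) ^ 2 = 0 := le_antisymm h1 (sq_nonneg _)
        simpa using pow_eq_zero_iff (n := 2) (by norm_num) |>.mp h2
      obtain ⟨j⟩ := hne
      rw [hG0, Matrix.mul_zero] at hinv
      have h11 := congrFun (congrFun hinv j) j
      simp [Matrix.one_apply_eq] at h11
  set C : ℝ := ∑ i, ∑ j, (G⁻¹ i j) ^ 2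
  have hs : 0 < Real.sqrt C := Real.sqrt_pos.mpr hCpos
  refine ⟨(Real.sqrt C)⁻¹, inv_pos.mpr hs, fun y hy => ?_⟩
  have hGw : G *ᵥ (G⁻¹ *ᵥ y) = y := by rw [Matrix.mulVec_mulVec, hinv, Matrix.one_mulVec]
  have hppos : 0 < y ⬝ᵥ y := dot_self_pos' hy
  have hmG : (G⁻¹ *ᵥ y) ⬝ᵥ y = (G⁻¹ *ᵥ y) ⬝ᵥ G *ᵥ (G⁻¹ *ᵥ y) := by rw [hGw]
  have hmnn : 0 ≤ (G⁻¹ *ᵥ y) ⬝ᵥ y := by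
    rw [hmG]; simpa [star_trivial] using hG.posSemidef.dotProduct_mulVec_nonneg (G⁻¹ *ᵥ y)
  have hcs : (y ⬝ᵥ y) ^ 2 ≤ (y ⬝ᵥ G *ᵥ y) * ((G⁻¹ *ᵥ y) ⬝ᵥ y) := by
    have h := psd_cs' hG.posSemidef y (G⁻¹ *ᵥ y)
    rw [hGw] at h
    exact h
  have hGynn : 0 ≤ y ⬝ᵥ G *ᵥ y := by simpa [star_trivial] using hG.posSemidef.dotProduct_mulVec_nonneg y
  have hwle : (G⁻¹ *ᵥ y) ⬝ᵥ (G⁻¹ *ᵥ y) ≤ C * (y ⬝ᵥ y) := mulVec_dot_le' G⁻¹ y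
  have hm2 : ((G⁻¹ *ᵥ y) ⬝ᵥ y) ^ 2 ≤ C * (y ⬝ᵥ y) ^ 2 := by
    have h := dot_cs' (G⁻¹ *ᵥ y) y
    nlinarith [h, hwle, hppos]
  have hmle : (G⁻¹ *ᵥ y) ⬝ᵥ y ≤ Real.sqrt C * (y ⬝ᵥ y) := by
    have h1 : (G⁻¹ *ᵥ y) ⬝ᵥ y = Real.sqrt (((G⁻¹ *ᵥ y) ⬝ᵥ y) ^ 2) := (Real.sqrt_sq hmnn).symm
    rw [h1]
    calc Real.sqrt (((G⁻¹ *ᵥ y) ⬝ᵥ y) ^ 2) ≤ Real.sqrt (C * (y ⬝ᵥ y) ^ 2) :=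
          Real.sqrt_le_sqrt hm2
      _ = Real.sqrt C * Real.sqrt ((y ⬝ᵥ y) ^ 2) := Real.sqrt_mul hCnn _
      _ = Real.sqrt C * (y ⬝ᵥ y) := by rw [Real.sqrt_sq hppos.le]
  have h2 : (y ⬝ᵥ y) ^ 2 ≤ (y ⬝ᵥ G *ᵥ y) * (Real.sqrt C * (y ⬝ᵥ y)) :=
    hcs.trans (mul_le_mul_of_nonneg_left hmle hGynn)
  have h3 : y ⬝ᵥ y ≤ (y ⬝ᵥ G *ᵥ y) * Real.sqrt C := by
    have h4 : (y ⬝ᵥ y) * (y ⬝ᵥ y) ≤ ((y ⬝ᵥ G *ᵥ y) * Real.sqrt C) * (y ⬝ᵥ y) := by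
      nlinarith [h2]
    exact le_of_mul_le_mul_right h4 hppos
  calc (Real.sqrt C)⁻¹ * (y ⬝ᵥ y) ≤ (Real.sqrt C)⁻¹ * ((y ⬝ᵥ G *ᵥ y) * Real.sqrt C) :=
        mul_le_mul_of_nonneg_left h3 (inv_nonneg.mpr hs.le)
    _ = y ⬝ᵥ G *ᵥ y := by field_simp

end Aux

/-- With `B = WAWᵀ`, `N = −AWᵀB⁻¹` and `P = πᵀR`, the largest eigenvalue
of `NᵀN` (expressed as the supremum of Rayleigh quotients `|Nx|²/|x|²`) is bounded by
`(1 + ‖P‖²_{Ker π}) / λ_min(WWᵀ)`. -/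
theorem subband_inverse_bound
    {I J K : Type*} [Fintype I] [Fintype J] [Fintype K]
    [DecidableEq I] [DecidableEq J] [DecidableEq K]
    (hcard : Fintype.card J = Fintype.card I - Fintype.card K)
    (A : Matrix I I ℝ) (hA : A.PosDef)
    (π : Matrix K I ℝ) (hπ : π.rank = Fintype.card K)
    (W : Matrix J I ℝ) (hWrank : W.rank = Fintype.card J)
    (hW : LinearMap.range Wᵀ.mulVecLin = LinearMap.ker π.mulVecLin)
    (R : Matrix K I ℝ) (hR1 : R * πᵀ = 1) (hR2 : R * A * Wᵀ = 0)
    (B : Matrix J J ℝ) (hB : B = W * A * Wᵀ)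
    (N : Matrix I J ℝ) (hN : N = -(A * Wᵀ * B⁻¹))
    (P : Matrix I I ℝ) (hP : P = πᵀ * R) :
    sSup {r : ℝ | ∃ x : J → ℝ, x ≠ 0 ∧
        r = (N.mulVec x ⬝ᵥ N.mulVec x) / (x ⬝ᵥ x)} ≤
      (1 + sSup {r : ℝ | ∃ x : I → ℝ, π.mulVec x = 0 ∧ x ≠ 0 ∧
          r = (P.mulVec x ⬝ᵥ P.mulVec x) / (x ⬝ᵥ x)}) /
        sInf {r : ℝ | ∃ x : J → ℝ, x ≠ 0 ∧
          r = (x ⬝ᵥ (W * Wᵀ).mulVec x) / (x ⬝ᵥ x)} := by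
  classical
  obtain ⟨SP, hSP⟩ : ∃ S : ℝ, sSup {r : ℝ | ∃ x : I → ℝ, π.mulVec x = 0 ∧ x ≠ 0 ∧
      r = (P.mulVec x ⬝ᵥ P.mulVec x) / (x ⬝ᵥ x)} = S := ⟨_, rfl⟩
  obtain ⟨lam, hlam⟩ : ∃ L : ℝ, sInf {r : ℝ | ∃ x : J → ℝ, x ≠ 0 ∧
      r = (x ⬝ᵥ (W * Wᵀ).mulVec x) / (x ⬝ᵥ x)} = L := ⟨_, rfl⟩
  rw [hSP, hlam]
  have hSPnn : 0 ≤ SP := by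
    rw [← hSP]
    apply Real.sSup_nonneg
    rintro r ⟨z, -, -, rfl⟩
    exact div_nonneg (dot_self_nonneg' _) (dot_self_nonneg' _)
  have hlamnn : 0 ≤ lam := by
    rw [← hlam]
    apply Real.sInf_nonneg
    rintro r ⟨y, hy, rfl⟩
    apply div_nonneg ?_ (dot_self_nonneg' _)
    rw [show (W * Wᵀ).mulVec y = W *ᵥ (Wᵀ *ᵥ y) from (Matrix.mulVec_mulVec y W Wᵀ).symm,
      Matrix.dotProduct_mulVec, ← Matrix.mulVec_transpose]
    exact dot_self_nonneg' _
  apply Real.sSup_le ?_ (div_nonneg (by linarith) hlamnn)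
  rintro r ⟨x, hx, rfl⟩
  have hJne : Nonempty J := by
    by_contra h
    exact hx (funext fun j => absurd ⟨j⟩ h)
  have hWinj := transpose_mulVec_injective' W hWrank
  have hπinj := transpose_mulVec_injective' π hπ
  have hBpd : B.PosDef := by rw [hB]; exact sandwich_posDef' hA hWinj
  have hBinv : B * B⁻¹ = 1 := Matrix.mul_nonsing_inv B (isUnit_iff_ne_zero.mpr hBpd.det_pos.ne')
  have hGpd : (W * Wᵀ).PosDef := by
    have h := sandwich_posDef' (Matrix.PosDef.one (n := I) (R := ℝ)) hWinj
    rwa [Matrix.mul_one] at h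
  have hππd : (π * πᵀ).PosDef := by
    have h := sandwich_posDef' (Matrix.PosDef.one (n := I) (R := ℝ)) hπinj
    rwa [Matrix.mul_one] at h
  have hππinv : (π * πᵀ) * (π * πᵀ)⁻¹ = 1 :=
    Matrix.mul_nonsing_inv _ (isUnit_iff_ne_zero.mpr hππd.det_pos.ne')
  have hpiW : π * Wᵀ = 0 := by
    ext k j
    have hmem : Wᵀ *ᵥ Pi.single j 1 ∈ LinearMap.ker π.mulVecLin := by
      rw [← hW]; exact ⟨Pi.single j 1, rfl⟩
    have h0 := LinearMap.mem_ker.mp hmem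
    rw [Matrix.mulVecLin_apply, Matrix.mulVec_mulVec] at h0
    have h1 := congrFun h0 k
    rw [Matrix.mulVec_single] at h1
    simpa using h1
  have hWpi : W * πᵀ = 0 := by
    have h := congrArg Matrix.transpose hpiW
    rwa [Matrix.transpose_mul, Matrix.transpose_transpose, Matrix.transpose_zero] at h
  obtain ⟨v, hv⟩ : ∃ v : I → ℝ, v = N.mulVec x := ⟨_, rfl⟩
  rw [← hv]
  obtain ⟨t0, ht0⟩ : ∃ t0 : K → ℝ, t0 = (π * πᵀ)⁻¹ *ᵥ (π *ᵥ v) := ⟨_, rfl⟩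
  obtain ⟨b, hbb⟩ : ∃ b : I → ℝ, b = πᵀ *ᵥ t0 := ⟨_, rfl⟩
  obtain ⟨a, haa⟩ : ∃ a : I → ℝ, a = v - b := ⟨_, rfl⟩
  have hπb : π *ᵥ b = π *ᵥ v := by
    rw [hbb, ht0, Matrix.mulVec_mulVec, Matrix.mulVec_mulVec, hππinv, Matrix.one_mulVec]
  have hπa : π *ᵥ a = 0 := by rw [haa, Matrix.mulVec_sub, hπb, sub_self]
  have hPN : P * N = 0 := by
    rw [hP, hN, Matrix.mul_neg]
    have h : πᵀ * R * (A * Wᵀ * B⁻¹) = πᵀ * (R * A * Wᵀ) * B⁻¹ := by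
      simp only [Matrix.mul_assoc]
    rw [h, hR2, Matrix.mul_zero, Matrix.zero_mul, neg_zero]
  have hPv : P *ᵥ v = 0 := by rw [hv, Matrix.mulVec_mulVec, hPN, Matrix.zero_mulVec]
  have hPπT : P * πᵀ = πᵀ := by rw [hP, Matrix.mul_assoc, hR1, Matrix.mul_one]
  have hPb : P *ᵥ b = b := by rw [hbb, Matrix.mulVec_mulVec, hPπT]
  have hPa : P *ᵥ a = -b := by rw [haa, Matrix.mulVec_sub, hPv, hPb, zero_sub]
  have hab : a ⬝ᵥ b = 0 := by
    rw [hbb, Matrix.dotProduct_mulVec, Matrix.vecMul_transpose, hπa, zero_dotProduct]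
  have hWN : W * N = -1 := by
    rw [hN, Matrix.mul_neg]
    have h : W * (A * Wᵀ * B⁻¹) = (W * A * Wᵀ) * B⁻¹ := by
      simp only [Matrix.mul_assoc]
    rw [h, ← hB, hBinv]
  have hWv : W *ᵥ v = -x := by
    rw [hv, Matrix.mulVec_mulVec, hWN, Matrix.neg_mulVec, Matrix.one_mulVec]
  have hWb : W *ᵥ b = 0 := by rw [hbb, Matrix.mulVec_mulVec, hWpi, Matrix.zero_mulVec]
  have hWa : W *ᵥ a = -x := by rw [haa, Matrix.mulVec_sub, hWv, hWb, sub_zero]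
  have ha_ne : a ≠ 0 := by
    intro h0
    have h := hWa
    rw [h0, Matrix.mulVec_zero] at h
    exact hx (neg_eq_zero.mp h.symm)
  obtain ⟨c, hc⟩ : ∃ c : J → ℝ, Wᵀ *ᵥ c = a := by
    have hmem : a ∈ LinearMap.ker π.mulVecLin :=
      LinearMap.mem_ker.mpr (by rw [Matrix.mulVecLin_apply]; exact hπa)
    rw [← hW] at hmem
    obtain ⟨c, hc⟩ := hmem
    exact ⟨c, by rw [← Matrix.mulVecLin_apply]; exact hc⟩
  have hc_ne : c ≠ 0 := by
    rintro rfl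
    apply ha_ne
    rw [← hc, Matrix.mulVec_zero]
  have hGc : (W * Wᵀ) *ᵥ c = -x := by rw [← Matrix.mulVec_mulVec, hc, hWa]
  have hcGc : c ⬝ᵥ (W * Wᵀ) *ᵥ c = a ⬝ᵥ a := by
    rw [← Matrix.mulVec_mulVec, Matrix.dotProduct_mulVec, ← Matrix.mulVec_transpose, hc]
  have hs_pos : 0 < x ⬝ᵥ x := dot_self_pos' hx
  have hq_pos : 0 < a ⬝ᵥ a := dot_self_pos' ha_ne
  have hp_pos : 0 < c ⬝ᵥ c := dot_self_pos' hc_ne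
  have hLbdd : BddBelow {r : ℝ | ∃ x : J → ℝ, x ≠ 0 ∧
      r = (x ⬝ᵥ (W * Wᵀ).mulVec x) / (x ⬝ᵥ x)} := by
    refine ⟨0, ?_⟩
    rintro r ⟨y, hy, rfl⟩
    apply div_nonneg ?_ (dot_self_nonneg' _)
    rw [show (W * Wᵀ).mulVec y = W *ᵥ (Wᵀ *ᵥ y) from (Matrix.mulVec_mulVec y W Wᵀ).symm,
      Matrix.dotProduct_mulVec, ← Matrix.mulVec_transpose]
    exact dot_self_nonneg' _
  obtain ⟨μ, hμpos, hμ⟩ := rayleigh_lower' hJne (W * Wᵀ) hGpd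
  have hlam_ge : μ ≤ lam := by
    rw [← hlam]
    refine le_csInf ⟨(c ⬝ᵥ (W * Wᵀ).mulVec c) / (c ⬝ᵥ c), ⟨c, hc_ne, rfl⟩⟩ ?_
    rintro r ⟨y, hy, rfl⟩
    rw [le_div_iff₀ (dot_self_pos' hy)]
    exact hμ y hy
  have hlam_pos : 0 < lam := lt_of_lt_of_le hμpos hlam_ge
  have hlam_le : lam * (c ⬝ᵥ c) ≤ a ⬝ᵥ a := by
    have h1 : lam ≤ (c ⬝ᵥ (W * Wᵀ).mulVec c) / (c ⬝ᵥ c) := by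
      rw [← hlam]
      exact csInf_le hLbdd ⟨c, hc_ne, rfl⟩
    rw [le_div_iff₀ hp_pos] at h1
    rw [hcGc] at h1
    exact h1
  have hSPbdd : BddAbove {r : ℝ | ∃ x : I → ℝ, π.mulVec x = 0 ∧ x ≠ 0 ∧
      r = (P.mulVec x ⬝ᵥ P.mulVec x) / (x ⬝ᵥ x)} := by
    refine ⟨∑ i, ∑ j, (P i j) ^ 2, ?_⟩
    rintro r ⟨z, hz0, hzne, rfl⟩
    rw [div_le_iff₀ (dot_self_pos' hzne)]
    exact mulVec_dot_le' P z
  have hSPle : (P.mulVec a ⬝ᵥ P.mulVec a) / (a ⬝ᵥ a) ≤ SP := by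
    rw [← hSP]
    exact le_csSup hSPbdd ⟨a, hπa, ha_ne, rfl⟩
  have hPa2 : P *ᵥ a ⬝ᵥ P *ᵥ a = b ⬝ᵥ b := by
    rw [hPa]; simp
  have hb_le : b ⬝ᵥ b ≤ SP * (a ⬝ᵥ a) := by
    rw [div_le_iff₀ hq_pos] at hSPle
    rw [← hPa2]
    linarith [hSPle]
  have hv_eq : v ⬝ᵥ v = a ⬝ᵥ a + b ⬝ᵥ b := by
    have hvab : v = a + b := by rw [haa]; exact (sub_add_cancel v b).symm
    rw [hvab, add_dotProduct, dotProduct_add, dotProduct_add, hab, dotProduct_comm b a, hab]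
    ring
  have hq2 : (a ⬝ᵥ a) ^ 2 ≤ (c ⬝ᵥ c) * (x ⬝ᵥ x) := by
    have h := dot_cs' c (-x)
    have h1 : c ⬝ᵥ (-x) = a ⬝ᵥ a := by rw [← hGc, hcGc]
    have h2 : (-x) ⬝ᵥ (-x) = x ⬝ᵥ x := by simp
    rw [h1, h2] at h
    exact h
  have hlq : lam * (a ⬝ᵥ a) ≤ x ⬝ᵥ x := by
    have hA1 : lam * ((a ⬝ᵥ a) ^ 2) ≤ lam * ((c ⬝ᵥ c) * (x ⬝ᵥ x)) :=
      mul_le_mul_of_nonneg_left hq2 hlam_pos.le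
    have hA2 : (lam * (c ⬝ᵥ c)) * (x ⬝ᵥ x) ≤ (a ⬝ᵥ a) * (x ⬝ᵥ x) :=
      mul_le_mul_of_nonneg_right hlam_le hs_pos.le
    have h4 : (lam * (a ⬝ᵥ a)) * (a ⬝ᵥ a) ≤ (x ⬝ᵥ x) * (a ⬝ᵥ a) := by
      calc (lam * (a ⬝ᵥ a)) * (a ⬝ᵥ a) = lam * ((a ⬝ᵥ a) ^ 2) := by ring
        _ ≤ lam * ((c ⬝ᵥ c) * (x ⬝ᵥ x)) := hA1
        _ = (lam * (c ⬝ᵥ c)) * (x ⬝ᵥ x) := by ring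
        _ ≤ (a ⬝ᵥ a) * (x ⬝ᵥ x) := hA2
        _ = (x ⬝ᵥ x) * (a ⬝ᵥ a) := by ring
    exact le_of_mul_le_mul_right h4 hq_pos
  rw [div_le_div_iff₀ hs_pos hlam_pos]
  have h5 : lam * (b ⬝ᵥ b) ≤ lam * (SP * (a ⬝ᵥ a)) := mul_le_mul_of_nonneg_left hb_le hlam_pos.le
  have h6 : (1 + SP) * (lam * (a ⬝ᵥ a)) ≤ (1 + SP) * (x ⬝ᵥ x) :=
    mul_le_mul_of_nonneg_left hlq (by linarith)
  calc (v ⬝ᵥ v) * lam = lam * (a ⬝ᵥ a) + lam * (b ⬝ᵥ b) := by rw [hv_eq]; ring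
    _ ≤ lam * (a ⬝ᵥ a) + lam * (SP * (a ⬝ᵥ a)) := add_le_add_right h5 _
    _ = (1 + SP) * (lam * (a ⬝ᵥ a)) := by ring
    _ ≤ (1 + SP) * (x ⬝ᵥ x) := h6
end

section
/- Let χ₁,…,χ_m and χ₁',…,χ_m' be two linearly independent families in a real inner product space H, with Gram matrices B_{ij} = ⟨χ_i, χ_j⟩ and B'_{ij} = ⟨χ_i', χ_j'⟩ (both symmetric positive definite), and set ℰ := (Σ_{i=1}^m ‖χ_i − χ_i'‖²)^{1/2}. If ℰ ≤ (λ_min(B))^{1/2}/2, then: (1) Cond(B') ≤ 8·Cond(B), where Cond(M) := λ_max(M)/λ_min(M) for a symmetric positive definite matrix M; (2) ‖B − B'‖₂ ≤ 3·(λ_max(B))^{1/2}·ℰ; (3) ‖B⁻¹ − (B')⁻¹‖₂ ≤ 12·(λ_max(B))^{1/2}·(λ_min(B))^{-2}·ℰ; where ‖·‖₂ denotes the spectral (operator) norm. -/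
open Matrix

/-- The smallest Rayleigh quotient of a square real matrix (equals `λ_min` for a symmetric
positive definite matrix). -/
noncomputable def lamMin {m : ℕ} (M : Matrix (Fin m) (Fin m) ℝ) : ℝ :=
  sInf {r : ℝ | ∃ x : Fin m → ℝ, x ≠ 0 ∧ r = (x ⬝ᵥ M.mulVec x) / (x ⬝ᵥ x)}

/-- The largest Rayleigh quotient of a square real matrix (equals `λ_max` for a symmetric
positive definite matrix). -/
noncomputable def lamMax {m : ℕ} (M : Matrix (Fin m) (Fin m) ℝ) : ℝ :=
  sSup {r : ℝ | ∃ x : Fin m → ℝ, x ≠ 0 ∧ r = (x ⬝ᵥ M.mulVec x) / (x ⬝ᵥ x)}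

/-- The spectral (operator) norm of a square real matrix with respect to Euclidean norms. -/
noncomputable def specNorm {m : ℕ} (M : Matrix (Fin m) (Fin m) ℝ) : ℝ :=
  sSup {r : ℝ | ∃ x : Fin m → ℝ, x ≠ 0 ∧
    r = Real.sqrt (M.mulVec x ⬝ᵥ M.mulVec x) / Real.sqrt (x ⬝ᵥ x)}

namespace GramPerturbAux

lemma le_of_sq_le_sq'' {a b : ℝ} (ha : 0 ≤ a) (hb : 0 ≤ b) (h : a^2 ≤ b^2) : a ≤ b := by
  nlinarith

lemma sbE_bound {sa sb E : ℝ} (hEsa : E ≤ sa/2) (hsab : sa ≤ sb) (hE : 0 ≤ E) (hsa : 0 < sa) :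
    (2*sb+E)*E ≤ 3*sb*E := by nlinarith

lemma fro_to_quarter {ea eb E sa : ℝ} (hfro : ea^2+eb^2 ≤ E^2) (hEsa : E ≤ sa/2) (hE : 0 ≤ E) :
    ea^2+eb^2 ≤ sa^2/4 := by nlinarith

lemma abs_diff_sq_le {a a' d sb E n : ℝ} (ha : 0 ≤ a) (ha' : 0 ≤ a') (hd : 0 ≤ d)
    (ht1 : -d ≤ a - a') (ht2 : a - a' ≤ d) (haub : a ≤ sb*n) (hde : d ≤ E*n)
    (hE : 0 ≤ E) (hsb : 0 ≤ sb) (hn : 0 ≤ n) :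
    -(((2*sb+E)*E)*n^2) ≤ a^2 - a'^2 ∧ a^2 - a'^2 ≤ ((2*sb+E)*E)*n^2 := by
  have p1 : 0 ≤ (d - (a-a')) * (a+a') := mul_nonneg (by linarith) (by linarith)
  have p1' : 0 ≤ (d + (a-a')) * (a+a') := mul_nonneg (by linarith) (by linarith)
  have p2 : 0 ≤ d * (a + d - a') := mul_nonneg hd (by linarith)
  have p2' : 0 ≤ d * (a' + d - a) := mul_nonneg hd (by linarith)
  have p3 : 0 ≤ (E*n - d) * (2*a + d) := mul_nonneg (by linarith) (by linarith)
  have p4 : 0 ≤ (E*n) * (2*(sb*n - a) + (E*n - d)) :=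
    mul_nonneg (mul_nonneg hE hn) (by linarith)
  constructor <;> nlinarith [p1, p1', p2, p2', p3, p4]

lemma key_ineq (a b ea eb : ℝ) (ha : 0 < a) (hab : a ≤ b) (hea : 0 ≤ ea) (heb : 0 ≤ eb)
    (h : ea^2 + eb^2 ≤ a^2/4) : (b+eb)^2*a^2 ≤ 8*b^2*(a-ea)^2 := by
  have hb : 0 < b := lt_of_lt_of_le ha hab
  have hfac : (0:ℝ) < 11*b^2 + a^2 := by positivity
  have hba : a^2 ≤ b^2 := by nlinarith
  have step1 : 2*a^2*b*eb ≤ 3*b^2*eb^2 + a^4/3 := by nlinarith [sq_nonneg (3*b*eb - a^2)]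
  have step2 : 0 ≤ (3*b^2+a^2) * (a^2/4 - ea^2 - eb^2) := by
    apply mul_nonneg (by positivity); linarith
  have h3 : 0 ≤ (11*b^2+a^2) * ((11*b^2+a^2)*ea^2 - 16*a*b^2*ea + 25*a^2*b^2/4 - 7*a^4/12) := by
    nlinarith [sq_nonneg ((11*b^2+a^2)*ea - 8*a*b^2),
      mul_nonneg (mul_nonneg (sq_nonneg a) (sq_nonneg b)) (sub_nonneg.2 hba),
      mul_nonneg (sq_nonneg (a^2)) (sub_nonneg.2 hba)]
  have h4 : 0 ≤ (11*b^2+a^2)*ea^2 - 16*a*b^2*ea + 25*a^2*b^2/4 - 7*a^4/12 :=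
    nonneg_of_mul_nonneg_right (by linarith [h3]) hfac
  nlinarith [step1, step2, h4]

variable {m : ℕ} {A M : Matrix (Fin m) (Fin m) ℝ}

lemma star_eq_trans (U : Matrix (Fin m) (Fin m) ℝ) : star U = Uᵀ := by
  rw [Matrix.star_eq_conjTranspose, conjTranspose_eq_transpose_of_trivial]

lemma dot_self_nonneg (x : Fin m → ℝ) : 0 ≤ x ⬝ᵥ x :=
  Finset.sum_nonneg fun i _ => mul_self_nonneg (x i)

lemma dot_self_pos {x : Fin m → ℝ} (hx : x ≠ 0) : 0 < x ⬝ᵥ x := by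
  rcases (dot_self_nonneg x).lt_or_eq with h | h
  · exact h
  · exfalso; apply hx
    funext i
    have hnn : ∀ j ∈ Finset.univ, 0 ≤ x j * x j := fun j _ => mul_self_nonneg _
    have h2 := (Finset.sum_eq_zero_iff_of_nonneg hnn).mp h.symm i (Finset.mem_univ i)
    simpa [mul_self_eq_zero] using h2

lemma diag_dot {U M : Matrix (Fin m) (Fin m) ℝ} {s : Fin m → ℝ}
    (hU : U ∈ Matrix.unitaryGroup (Fin m) ℝ)
    (hM : M = U * diagonal s * star U) (x : Fin m → ℝ) :
    x ⬝ᵥ M *ᵥ x = ∑ k, s k * ((star U *ᵥ x) k)^2 ∧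
    x ⬝ᵥ x = ∑ k, ((star U *ᵥ x) k)^2 ∧
    (M *ᵥ x) ⬝ᵥ (M *ᵥ x) = ∑ k, (s k)^2 * ((star U *ᵥ x) k)^2 := by
  have h1 : star U * U = 1 := Matrix.UnitaryGroup.star_mul_self ⟨U, hU⟩
  have h2 : U * star U = 1 := by rw [mul_eq_one_comm] at h1; exact h1
  set y := star U *ᵥ x with hy
  have hxy : x ᵥ* U = y := by
    rw [hy, star_eq_trans, mulVec_transpose]
  have hUdot : ∀ z w : Fin m → ℝ, (U *ᵥ z) ⬝ᵥ (U *ᵥ w) = z ⬝ᵥ w := by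
    intro z w
    rw [dotProduct_mulVec, vecMul_mulVec, ← star_eq_trans, h1, vecMul_one]
  have hMx : M *ᵥ x = U *ᵥ (fun k => s k * y k) := by
    have hd : diagonal s *ᵥ y = fun k => s k * y k := by
      ext k; rw [mulVec_diagonal]
    rw [hM, ← mulVec_mulVec, ← mulVec_mulVec, ← hy, hd]
  have hdiagdot : ∀ z w : Fin m → ℝ, z ⬝ᵥ (fun k => s k * w k) = ∑ k, s k * (z k * w k) := by
    intro z w; simp [dotProduct, mul_comm, mul_left_comm]
  refine ⟨?_, ?_, ?_⟩
  · rw [hMx, dotProduct_mulVec, hxy, hdiagdot]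
    congr 1; ext k; ring
  · have hxU : x = U *ᵥ y := by
      rw [hy, mulVec_mulVec, h2, one_mulVec]
    rw [hxU, hUdot, dotProduct]
    congr 1; ext k; ring
  · rw [hMx, hUdot, dotProduct]
    congr 1; ext k; ring

lemma herm_rep (hA : A.IsHermitian) :
    A = (hA.eigenvectorUnitary : Matrix (Fin m) (Fin m) ℝ) * diagonal hA.eigenvalues
      * star (hA.eigenvectorUnitary : Matrix (Fin m) (Fin m) ℝ) := by
  have := hA.spectral_theorem
  simpa using this

lemma vk_dot (hA : A.IsHermitian) (i j : Fin m) :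
    ⇑(hA.eigenvectorBasis i) ⬝ᵥ ⇑(hA.eigenvectorBasis j) = if i = j then 1 else 0 := by
  have h := hA.eigenvectorBasis.orthonormal
  rw [orthonormal_iff_ite] at h
  have h2 := h i j
  rw [PiLp.inner_apply] at h2
  simpa [dotProduct, mul_comm] using h2

lemma vk_ne (hA : A.IsHermitian) (i : Fin m) : ⇑(hA.eigenvectorBasis i) ≠ (0 : Fin m → ℝ) := by
  intro h
  have h1 := vk_dot hA i i
  rw [h] at h1
  simp at h1

lemma rep_of_mulVec_basis (hA : A.IsHermitian) (s : Fin m → ℝ)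
    (h : ∀ k, M *ᵥ ⇑(hA.eigenvectorBasis k) = s k • ⇑(hA.eigenvectorBasis k)) :
    M = (hA.eigenvectorUnitary : Matrix (Fin m) (Fin m) ℝ) * diagonal s
      * star (hA.eigenvectorUnitary : Matrix (Fin m) (Fin m) ℝ) := by
  set U := (hA.eigenvectorUnitary : Matrix (Fin m) (Fin m) ℝ) with hUdef
  have h1 : star U * U = 1 := Matrix.UnitaryGroup.star_mul_self hA.eigenvectorUnitary
  have h2 : U * star U = 1 := by rw [mul_eq_one_comm] at h1; exact h1
  have hMU : M * U = U * diagonal s := by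
    ext a k
    have hk := congrFun (h k) a
    simp only [Matrix.mulVec, dotProduct, Pi.smul_apply, smul_eq_mul] at hk
    rw [Matrix.mul_apply, Matrix.mul_diagonal]
    simpa [hUdef, Matrix.IsHermitian.eigenvectorUnitary_apply, mul_comm] using hk
  calc M = M * (U * star U) := by rw [h2, mul_one]
    _ = (M * U) * star U := by rw [mul_assoc]
    _ = U * diagonal s * star U := by rw [hMU]

lemma rayleigh_eigen (hA : A.IsHermitian) (i : Fin m) :
    (⇑(hA.eigenvectorBasis i) ⬝ᵥ A *ᵥ ⇑(hA.eigenvectorBasis i)) = hA.eigenvalues i := by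
  rw [hA.mulVec_eigenvectorBasis, dotProduct_smul]
  simp [vk_dot hA i i]

lemma mem_rayleigh_set (hA : A.IsHermitian) (i : Fin m) :
    hA.eigenvalues i ∈ {r : ℝ | ∃ x : Fin m → ℝ, x ≠ 0 ∧ r = (x ⬝ᵥ A.mulVec x) / (x ⬝ᵥ x)} := by
  refine ⟨⇑(hA.eigenvectorBasis i), vk_ne hA i, ?_⟩
  rw [show A.mulVec ⇑(hA.eigenvectorBasis i) = A *ᵥ ⇑(hA.eigenvectorBasis i) from rfl,
    rayleigh_eigen hA i]
  have h := vk_dot hA i i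
  rw [if_pos rfl] at h
  rw [h, div_one]

lemma le_rayleigh (hA : A.IsHermitian) {x : Fin m → ℝ} (hx : x ≠ 0) {lo : ℝ}
    (hlo : ∀ k, lo ≤ hA.eigenvalues k) :
    lo ≤ (x ⬝ᵥ A.mulVec x) / (x ⬝ᵥ x) := by
  obtain ⟨h1, h2, -⟩ := diag_dot hA.eigenvectorUnitary.2 (herm_rep hA) x
  have hd : 0 < x ⬝ᵥ x := dot_self_pos hx
  rw [le_div_iff₀ hd]
  calc lo * (x ⬝ᵥ x)
      = ∑ k, lo * ((star (hA.eigenvectorUnitary : Matrix (Fin m) (Fin m) ℝ) *ᵥ x) k)^2 := by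
        rw [h2, Finset.mul_sum]
    _ ≤ _ := by
        rw [h1]
        exact Finset.sum_le_sum fun k _ => mul_le_mul_of_nonneg_right (hlo k) (sq_nonneg _)

lemma rayleigh_le (hA : A.IsHermitian) {x : Fin m → ℝ} (hx : x ≠ 0) {hi : ℝ}
    (hhi : ∀ k, hA.eigenvalues k ≤ hi) :
    (x ⬝ᵥ A.mulVec x) / (x ⬝ᵥ x) ≤ hi := by
  obtain ⟨h1, h2, -⟩ := diag_dot hA.eigenvectorUnitary.2 (herm_rep hA) x
  have hd : 0 < x ⬝ᵥ x := dot_self_pos hx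
  rw [div_le_iff₀ hd]
  calc x ⬝ᵥ A.mulVec x
      = ∑ k, hA.eigenvalues k *
        ((star (hA.eigenvectorUnitary : Matrix (Fin m) (Fin m) ℝ) *ᵥ x) k)^2 := h1
    _ ≤ ∑ k, hi * ((star (hA.eigenvectorUnitary : Matrix (Fin m) (Fin m) ℝ) *ᵥ x) k)^2 :=
        Finset.sum_le_sum fun k _ => mul_le_mul_of_nonneg_right (hhi k) (sq_nonneg _)
    _ = hi * (x ⬝ᵥ x) := by rw [h2, Finset.mul_sum]

lemma lamMin_spec (hm : 0 < m) (hA : A.IsHermitian) :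
    ∃ i, lamMin A = hA.eigenvalues i ∧ ∀ j, hA.eigenvalues i ≤ hA.eigenvalues j := by
  obtain ⟨i, -, hi⟩ := Finset.exists_min_image Finset.univ hA.eigenvalues
    ⟨⟨0, hm⟩, Finset.mem_univ _⟩
  have hi' : ∀ j, hA.eigenvalues i ≤ hA.eigenvalues j := fun j => hi j (Finset.mem_univ j)
  refine ⟨i, le_antisymm ?_ ?_, hi'⟩
  · exact csInf_le ⟨hA.eigenvalues i, fun r ⟨x, hx, hr⟩ => hr ▸ le_rayleigh hA hx hi'⟩
      (mem_rayleigh_set hA i)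
  · exact le_csInf ⟨_, mem_rayleigh_set hA i⟩ fun r ⟨x, hx, hr⟩ => hr ▸ le_rayleigh hA hx hi'

lemma lamMax_spec (hm : 0 < m) (hA : A.IsHermitian) :
    ∃ i, lamMax A = hA.eigenvalues i ∧ ∀ j, hA.eigenvalues j ≤ hA.eigenvalues i := by
  obtain ⟨i, -, hi⟩ := Finset.exists_max_image Finset.univ hA.eigenvalues
    ⟨⟨0, hm⟩, Finset.mem_univ _⟩
  have hi' : ∀ j, hA.eigenvalues j ≤ hA.eigenvalues i := fun j => hi j (Finset.mem_univ j)
  refine ⟨i, le_antisymm ?_ ?_, hi'⟩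
  · exact csSup_le ⟨_, mem_rayleigh_set hA i⟩ fun r ⟨x, hx, hr⟩ => hr ▸ rayleigh_le hA hx hi'
  · exact le_csSup ⟨hA.eigenvalues i, fun r ⟨x, hx, hr⟩ => hr ▸ rayleigh_le hA hx hi'⟩
      (mem_rayleigh_set hA i)

lemma lamMin_le_quad (hm : 0 < m) (hA : A.IsHermitian) (x : Fin m → ℝ) :
    lamMin A * (x ⬝ᵥ x) ≤ x ⬝ᵥ A.mulVec x := by
  by_cases hx : x = 0
  · simp [hx]
  obtain ⟨i, hval, hmin⟩ := lamMin_spec hm hA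
  have h := le_rayleigh hA hx (lo := hA.eigenvalues i) hmin
  rw [le_div_iff₀ (dot_self_pos hx)] at h
  rw [hval]; linarith

lemma quad_le_lamMax (hm : 0 < m) (hA : A.IsHermitian) (x : Fin m → ℝ) :
    x ⬝ᵥ A.mulVec x ≤ lamMax A * (x ⬝ᵥ x) := by
  by_cases hx : x = 0
  · simp [hx]
  obtain ⟨i, hval, hmax⟩ := lamMax_spec hm hA
  have h := rayleigh_le hA hx (hi := hA.eigenvalues i) hmax
  rw [div_le_iff₀ (dot_self_pos hx)] at h
  rw [hval]; linarith

lemma specNorm_le_of_sq {K : ℝ} (hK : 0 ≤ K)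
    (h : ∀ x : Fin m → ℝ, (M *ᵥ x) ⬝ᵥ (M *ᵥ x) ≤ K^2 * (x ⬝ᵥ x)) :
    specNorm M ≤ K := by
  apply Real.sSup_le _ hK
  rintro r ⟨x, hx, rfl⟩
  have hd : 0 < x ⬝ᵥ x := dot_self_pos hx
  have hds : 0 < Real.sqrt (x ⬝ᵥ x) := Real.sqrt_pos.mpr hd
  rw [div_le_iff₀ hds]
  calc Real.sqrt (M.mulVec x ⬝ᵥ M.mulVec x) ≤ Real.sqrt (K^2 * (x ⬝ᵥ x)) :=
        Real.sqrt_le_sqrt (h x)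
    _ = K * Real.sqrt (x ⬝ᵥ x) := by
        rw [Real.sqrt_mul (sq_nonneg K), Real.sqrt_sq hK]

lemma sq_norm_mulVec_le (hA : A.IsHermitian) {s : Fin m → ℝ} {K : ℝ}
    (hrep : M = (hA.eigenvectorUnitary : Matrix (Fin m) (Fin m) ℝ) * diagonal s
      * star (hA.eigenvectorUnitary : Matrix (Fin m) (Fin m) ℝ))
    (hs : ∀ k, |s k| ≤ K) (x : Fin m → ℝ) :
    (M *ᵥ x) ⬝ᵥ (M *ᵥ x) ≤ K^2 * (x ⬝ᵥ x) := by
  obtain ⟨-, h2, h3⟩ := diag_dot hA.eigenvectorUnitary.2 hrep x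
  rw [h3, h2, Finset.mul_sum]
  refine Finset.sum_le_sum fun k _ => mul_le_mul_of_nonneg_right ?_ (sq_nonneg _)
  calc (s k)^2 = |s k|^2 := (sq_abs _).symm
    _ ≤ K^2 := by
        have hk := hs k
        nlinarith [abs_nonneg (s k)]

lemma abs_eigen_le_of_quad (hA : A.IsHermitian) {K : ℝ}
    (h : ∀ x : Fin m → ℝ, |x ⬝ᵥ A *ᵥ x| ≤ K * (x ⬝ᵥ x)) (k : Fin m) :
    |hA.eigenvalues k| ≤ K := by
  have h1 := h ⇑(hA.eigenvectorBasis k)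
  rw [rayleigh_eigen hA k] at h1
  have h2 := vk_dot hA k k
  rw [if_pos rfl] at h2
  rw [h2, mul_one] at h1
  exact h1

lemma sum_quad_eigen_basis (hA : A.IsHermitian) (G : Matrix (Fin m) (Fin m) ℝ) :
    ∑ k, (⇑(hA.eigenvectorBasis k) ⬝ᵥ G *ᵥ ⇑(hA.eigenvectorBasis k)) = ∑ a, G a a := by
  set U := (hA.eigenvectorUnitary : Matrix (Fin m) (Fin m) ℝ) with hUdef
  have h1 : star U * U = 1 := Matrix.UnitaryGroup.star_mul_self hA.eigenvectorUnitary
  have h2 : U * star U = 1 := by rw [mul_eq_one_comm] at h1; exact h1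
  have hentry : ∀ k, ⇑(hA.eigenvectorBasis k) ⬝ᵥ G *ᵥ ⇑(hA.eigenvectorBasis k)
      = (star U * G * U) k k := by
    intro k
    have hv : ∀ a, ⇑(hA.eigenvectorBasis k) a = U a k := fun a => rfl
    simp only [Matrix.mul_apply, Matrix.mulVec, dotProduct, star_apply, star_trivial,
      Finset.sum_mul, Finset.mul_sum, hv]
    rw [Finset.sum_comm]
    congr 1; ext a; congr 1; ext b; ring
  calc ∑ k, (⇑(hA.eigenvectorBasis k) ⬝ᵥ G *ᵥ ⇑(hA.eigenvectorBasis k))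
      = ∑ k, (star U * G * U) k k := Finset.sum_congr rfl fun k _ => hentry k
    _ = Matrix.trace (star U * G * U) := rfl
    _ = Matrix.trace (U * star U * G) := by rw [Matrix.trace_mul_cycle]
    _ = ∑ a, G a a := by rw [h2, one_mul]; rfl

lemma inv_rep (hA : A.IsHermitian) (h : ∀ k, hA.eigenvalues k ≠ 0) :
    A⁻¹ = (hA.eigenvectorUnitary : Matrix (Fin m) (Fin m) ℝ)
        * diagonal (fun k => (hA.eigenvalues k)⁻¹)
        * star (hA.eigenvectorUnitary : Matrix (Fin m) (Fin m) ℝ) ∧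
    A * A⁻¹ = 1 ∧ A⁻¹ * A = 1 := by
  set U := (hA.eigenvectorUnitary : Matrix (Fin m) (Fin m) ℝ) with hUdef
  have h1 : star U * U = 1 := Matrix.UnitaryGroup.star_mul_self hA.eigenvectorUnitary
  have h2 : U * star U = 1 := by rw [mul_eq_one_comm] at h1; exact h1
  have hdd : diagonal hA.eigenvalues * diagonal (fun k => (hA.eigenvalues k)⁻¹) = 1 := by
    rw [diagonal_mul_diagonal]
    rw [show ((fun k => hA.eigenvalues k * (hA.eigenvalues k)⁻¹) : Fin m → ℝ)
      = fun _ => 1 from funext fun k => mul_inv_cancel₀ (h k), diagonal_one]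
  have hright : A * (U * diagonal (fun k => (hA.eigenvalues k)⁻¹) * star U) = 1 := by
    have hrep := herm_rep hA
    calc A * (U * diagonal (fun k => (hA.eigenvalues k)⁻¹) * star U)
        = (U * diagonal hA.eigenvalues * star U)
          * (U * diagonal (fun k => (hA.eigenvalues k)⁻¹) * star U) := by rw [← hrep]
      _
          * (U * diagonal (fun k => (hA.eigenvalues k)⁻¹) * star U)
          = U * diagonal hA.eigenvalues * (star U * U)
          * diagonal (fun k => (hA.eigenvalues k)⁻¹) * star U := by
          simp only [Matrix.mul_assoc]
      _ = U * (diagonal hA.eigenvalues * diagonal (fun k => (hA.eigenvalues k)⁻¹)) * star U := by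
          rw [h1]; simp only [Matrix.mul_assoc, Matrix.mul_one]
      _ = 1 := by rw [hdd, Matrix.mul_one, h2]
  have hinv : A⁻¹ = U * diagonal (fun k => (hA.eigenvalues k)⁻¹) * star U :=
    Matrix.inv_eq_right_inv hright
  refine ⟨hinv, ?_, ?_⟩
  · rw [hinv]; exact hright
  · rw [hinv]
    have hrep := herm_rep hA
    calc (U * diagonal (fun k => (hA.eigenvalues k)⁻¹) * star U) * A
        = (U * diagonal (fun k => (hA.eigenvalues k)⁻¹) * star U)
          * (U * diagonal hA.eigenvalues * star U) := by rw [← hrep]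
      _ = U * diagonal (fun k => (hA.eigenvalues k)⁻¹) * (star U * U)
          * diagonal hA.eigenvalues * star U := by simp only [Matrix.mul_assoc]
      _ = U * (diagonal (fun k => (hA.eigenvalues k)⁻¹) * diagonal hA.eigenvalues)
          * star U := by rw [h1]; simp only [Matrix.mul_assoc, Matrix.mul_one]
      _ = 1 := by
          rw [diagonal_mul_diagonal,
            show ((fun k => (hA.eigenvalues k)⁻¹ * hA.eigenvalues k) : Fin m → ℝ)
              = fun _ => 1 from funext fun k => inv_mul_cancel₀ (h k), diagonal_one,
            Matrix.mul_one, h2]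

end GramPerturbAux
section GramLemmas

variable {m : ℕ} {H : Type*} [NormedAddCommGroup H] [InnerProductSpace ℝ H]

namespace GramPerturbAux

lemma gram_quad (f : Fin m → H) (B : Matrix (Fin m) (Fin m) ℝ)
    (hB : ∀ i j, B i j = (inner ℝ (f i) (f j) : ℝ)) (x : Fin m → ℝ) :
    x ⬝ᵥ B *ᵥ x = ‖∑ i, x i • f i‖^2 := by
  rw [← real_inner_self_eq_norm_sq, inner_sum]
  simp only [sum_inner, real_inner_smul_left, real_inner_smul_right]
  simp only [dotProduct, Matrix.mulVec, dotProduct, hB, Finset.mul_sum]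
  rw [Finset.sum_comm]
  congr 1; ext j; congr 1; ext i; ring

lemma cauchy_sum (f : Fin m → H) (x : Fin m → ℝ) :
    ‖∑ i, x i • f i‖^2 ≤ (∑ i, ‖f i‖^2) * (x ⬝ᵥ x) := by
  have h1 : ‖∑ i, x i • f i‖ ≤ ∑ i, |x i| * ‖f i‖ := by
    refine (norm_sum_le _ _).trans_eq ?_
    congr 1; ext i; rw [norm_smul, Real.norm_eq_abs]
  have h2 : (∑ i, |x i| * ‖f i‖)^2 ≤ (∑ i, |x i|^2) * (∑ i, ‖f i‖^2) :=
    Finset.sum_mul_sq_le_sq_mul_sq Finset.univ _ _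
  have h3 : ‖∑ i, x i • f i‖^2 ≤ (∑ i, |x i|^2) * (∑ i, ‖f i‖^2) := by
    refine le_trans ?_ h2
    have hnn := norm_nonneg (∑ i, x i • f i)
    nlinarith [Finset.sum_nonneg
      (fun i (_ : i ∈ Finset.univ) => mul_nonneg (abs_nonneg (x i)) (norm_nonneg (f i)))]
  have h4 : (∑ i, |x i|^2) = x ⬝ᵥ x := by
    simp [dotProduct, sq_abs, pow_two]
  rw [h4] at h3
  linarith [h3]

end GramPerturbAux

end GramLemmas

set_option maxHeartbeats 2000000 in
open GramPerturbAux in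
/-- Perturbation lemma for Gram matrices: if
`ℰ = (Σ ‖χ_i − χ_i'‖²)^{1/2} ≤ √(λ_min(B))/2`, then
(1) `Cond(B') ≤ 8 Cond(B)`; (2) `‖B − B'‖₂ ≤ 3 √(λ_max(B)) ℰ`;
(3) `‖B⁻¹ − B'⁻¹‖₂ ≤ 12 √(λ_max(B)) λ_min(B)⁻² ℰ`. -/
theorem gram_matrix_perturbation
    {H : Type*} [NormedAddCommGroup H] [InnerProductSpace ℝ H]
    (m : ℕ) (χ χ' : Fin m → H)
    (hχ : LinearIndependent ℝ χ) (hχ' : LinearIndependent ℝ χ')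
    (B B' : Matrix (Fin m) (Fin m) ℝ)
    (hB : ∀ i j, B i j = (inner ℝ (χ i) (χ j) : ℝ))
    (hB' : ∀ i j, B' i j = (inner ℝ (χ' i) (χ' j) : ℝ))
    (E : ℝ) (hE : E = Real.sqrt (∑ i, ‖χ i - χ' i‖ ^ 2))
    (hsmall : E ≤ Real.sqrt (lamMin B) / 2) :
    lamMax B' / lamMin B' ≤ 8 * (lamMax B / lamMin B) ∧
    specNorm (B - B') ≤ 3 * Real.sqrt (lamMax B) * E ∧
    specNorm (B⁻¹ - B'⁻¹) ≤ 12 * Real.sqrt (lamMax B) * E / (lamMin B) ^ 2 := by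
  classical
  have hEnn : 0 ≤ E := hE ▸ Real.sqrt_nonneg _
  have hsum_nn : (0:ℝ) ≤ ∑ i, ‖χ i - χ' i‖ ^ 2 := Finset.sum_nonneg fun i _ => sq_nonneg _
  have hE2 : E^2 = ∑ i, ‖χ i - χ' i‖ ^ 2 := by rw [hE, Real.sq_sqrt hsum_nn]
  rcases Nat.eq_zero_or_pos m with hm | hm
  · subst hm
    have hset : ∀ M : Matrix (Fin 0) (Fin 0) ℝ,
        {r : ℝ | ∃ x : Fin 0 → ℝ, x ≠ 0 ∧ r = (x ⬝ᵥ M.mulVec x) / (x ⬝ᵥ x)} = (∅ : Set ℝ) := by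
      intro M; ext r
      simp only [Set.mem_setOf_eq, Set.mem_empty_iff_false, iff_false, not_exists]
      intro x hx
      exact absurd (funext fun i => i.elim0) hx.1
    have hset2 : ∀ M : Matrix (Fin 0) (Fin 0) ℝ,
        {r : ℝ | ∃ x : Fin 0 → ℝ, x ≠ 0 ∧
          r = Real.sqrt (M.mulVec x ⬝ᵥ M.mulVec x) / Real.sqrt (x ⬝ᵥ x)} = (∅ : Set ℝ) := by
      intro M; ext r
      simp only [Set.mem_setOf_eq, Set.mem_empty_iff_false, iff_false, not_exists]
      intro x hx
      exact absurd (funext fun i => i.elim0) hx.1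
    have hlm : ∀ M : Matrix (Fin 0) (Fin 0) ℝ, lamMin M = 0 := fun M => by
      rw [lamMin, hset, Real.sInf_empty]
    have hlM : ∀ M : Matrix (Fin 0) (Fin 0) ℝ, lamMax M = 0 := fun M => by
      rw [lamMax, hset, Real.sSup_empty]
    have hsp : ∀ M : Matrix (Fin 0) (Fin 0) ℝ, specNorm M = 0 := fun M => by
      rw [specNorm, hset2, Real.sSup_empty]
    refine ⟨?_, ?_, ?_⟩
    · simp [hlm, hlM]
    · rw [hsp]; positivity
    · rw [hsp]
      have : (0:ℝ) ≤ 12 * Real.sqrt (lamMax B) * E := by positivity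
      positivity
    -- main case: m > 0
  have hBsym : B.IsHermitian := by
    ext i j
    simp only [Matrix.conjTranspose_apply, hB, star_trivial]
    exact real_inner_comm _ _
  have hB'sym : B'.IsHermitian := by
    ext i j
    simp only [Matrix.conjTranspose_apply, hB', star_trivial]
    exact real_inner_comm _ _
  set sa := Real.sqrt (lamMin B) with hsa_def
  set sb := Real.sqrt (lamMax B) with hsb_def
  have qB : ∀ x : Fin m → ℝ, x ⬝ᵥ B *ᵥ x = ‖∑ i, x i • χ i‖^2 := gram_quad χ B hB
  have qB' : ∀ x : Fin m → ℝ, x ⬝ᵥ B' *ᵥ x = ‖∑ i, x i • χ' i‖^2 := gram_quad χ' B' hB'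
  have hdbound : ∀ x : Fin m → ℝ, ‖∑ i, x i • (χ i - χ' i)‖^2 ≤ E^2 * (x ⬝ᵥ x) := by
    intro x; rw [hE2]; exact cauchy_sum _ x
  have hdiffu : ∀ x : Fin m → ℝ,
      ∑ i, x i • (χ i - χ' i) = (∑ i, x i • χ i) - (∑ i, x i • χ' i) := by
    intro x
    rw [← Finset.sum_sub_distrib]
    exact Finset.sum_congr rfl fun i _ => smul_sub _ _ _
  obtain ⟨imin, hmin_eq, hmin_le⟩ := lamMin_spec hm hBsym
  obtain ⟨imax, hmax_eq, hmax_le⟩ := lamMax_spec hm hBsym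
  have hlpos : 0 < lamMin B := by
    rw [hmin_eq]
    have h1 := rayleigh_eigen hBsym imin
    rw [qB] at h1
    have hne : (∑ i, ⇑(hBsym.eigenvectorBasis imin) i • χ i) ≠ 0 := by
      intro hz
      have hall := (Fintype.linearIndependent_iff.mp hχ) _ hz
      exact vk_ne hBsym imin (funext fun i => hall i)
    rw [← h1]
    exact pow_pos (norm_pos_iff.mpr hne) 2
  have hΛ : lamMin B ≤ lamMax B := by rw [hmin_eq, hmax_eq]; exact hmin_le imax
  have hΛpos : 0 < lamMax B := lt_of_lt_of_le hlpos hΛ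
  have hsa_pos : 0 < sa := Real.sqrt_pos.mpr hlpos
  have hsb_pos : 0 < sb := Real.sqrt_pos.mpr hΛpos
  have hsa2 : sa^2 = lamMin B := Real.sq_sqrt hlpos.le
  have hsb2 : sb^2 = lamMax B := Real.sq_sqrt hΛpos.le
  have hsab : sa ≤ sb := Real.sqrt_le_sqrt hΛ
  have hEsa : E ≤ sa / 2 := hsmall
  -- eigen data for B'
  obtain ⟨i1, hmin'_eq, hmin'_le⟩ := lamMin_spec hm hB'sym
  obtain ⟨j1, hmax'_eq, hmax'_le⟩ := lamMax_spec hm hB'sym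
  set v : Fin m → ℝ := ⇑(hB'sym.eigenvectorBasis i1) with hv_def
  set w : Fin m → ℝ := ⇑(hB'sym.eigenvectorBasis j1) with hw_def
  have hvv : v ⬝ᵥ v = 1 := by have h := vk_dot hB'sym i1 i1; rwa [if_pos rfl] at h
  have hww : w ⬝ᵥ w = 1 := by have h := vk_dot hB'sym j1 j1; rwa [if_pos rfl] at h
  have hlam'v : lamMin B' = ‖∑ i, v i • χ' i‖^2 := by
    rw [hmin'_eq, ← rayleigh_eigen hB'sym i1]
    exact qB' v
  have hΛ'w : lamMax B' = ‖∑ i, w i • χ' i‖^2 := by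
    rw [hmax'_eq, ← rayleigh_eigen hB'sym j1]
    exact qB' w
  have hav : sa ≤ ‖∑ i, v i • χ i‖ := by
    have h1 := lamMin_le_quad hm hBsym v
    rw [qB, hvv, mul_one] at h1
    calc sa ≤ Real.sqrt (‖∑ i, v i • χ i‖^2) := Real.sqrt_le_sqrt h1
      _ = ‖∑ i, v i • χ i‖ := Real.sqrt_sq (norm_nonneg _)
  have haw : ‖∑ i, w i • χ i‖ ≤ sb := by
    have h1 := quad_le_lamMax hm hBsym w
    rw [qB, hww, mul_one] at h1
    calc ‖∑ i, w i • χ i‖ = Real.sqrt (‖∑ i, w i • χ i‖^2) := (Real.sqrt_sq (norm_nonneg _)).symm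
      _ ≤ sb := Real.sqrt_le_sqrt h1
  set ea := ‖∑ i, v i • (χ i - χ' i)‖ with hea_def
  set eb := ‖∑ i, w i • (χ i - χ' i)‖ with heb_def
  have hea_nn : 0 ≤ ea := norm_nonneg _
  have heb_nn : 0 ≤ eb := norm_nonneg _
  have heaE : ea ≤ E := by
    have h1 := hdbound v
    rw [hvv, mul_one] at h1
    exact le_of_sq_le_sq'' hea_nn hEnn h1
  have htri_v : sa - ea ≤ ‖∑ i, v i • χ' i‖ := by
    have h := norm_sub_norm_le (∑ i, v i • χ i) (∑ i, v i • χ' i)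
    rw [← hdiffu v] at h
    linarith [hav]
  have htri_w : ‖∑ i, w i • χ' i‖ ≤ sb + eb := by
    have h := norm_sub_norm_le (∑ i, w i • χ' i) (∑ i, w i • χ i)
    rw [norm_sub_rev, ← hdiffu w] at h
    linarith [haw]
  have hsaea : sa/2 ≤ sa - ea := by linarith
  have hsa2' : sa/2 ≤ ‖∑ i, v i • χ' i‖ := le_trans hsaea htri_v
  have hlam'pos : 0 < lamMin B' := by
    rw [hlam'v]
    exact pow_pos (lt_of_lt_of_le (by positivity) hsa2') 2
  have hlam'q : lamMin B / 4 ≤ lamMin B' := by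
    have h2 : (sa/2)^2 ≤ ‖∑ i, v i • χ' i‖^2 := pow_le_pow_left₀ (by positivity) hsa2' 2
    rw [hlam'v, ← hsa2]
    calc sa^2/4 = (sa/2)^2 := by ring
      _ ≤ _ := h2
  refine ⟨?_, ?_, ?_⟩
  · -- Part 1
    by_cases hij : i1 = j1
    · have hEq : lamMax B' = lamMin B' := by rw [hmin'_eq, hmax'_eq, hij]
      rw [hEq, div_self hlam'pos.ne']
      calc (1:ℝ) ≤ lamMax B / lamMin B := (one_le_div hlpos).mpr hΛ
        _ ≤ 8 * (lamMax B / lamMin B) := le_mul_of_one_le_left (by positivity) (by norm_num)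
    · have hfro : ea^2 + eb^2 ≤ E^2 := by
        set G : Matrix (Fin m) (Fin m) ℝ :=
          Matrix.of fun a b => (inner ℝ (χ a - χ' a) (χ b - χ' b) : ℝ) with hG_def
        have hGq : ∀ x : Fin m → ℝ, x ⬝ᵥ G *ᵥ x = ‖∑ i, x i • (χ i - χ' i)‖^2 :=
          gram_quad _ G (fun i j => rfl)
        have hsum := sum_quad_eigen_basis hB'sym G
        have hdiag : ∑ a, G a a = E^2 := by
          rw [hE2]
          exact Finset.sum_congr rfl fun a _ => real_inner_self_eq_norm_sq _
        have hterm : ∀ k, (0:ℝ) ≤ ⇑(hB'sym.eigenvectorBasis k) ⬝ᵥ G *ᵥ ⇑(hB'sym.eigenvectorBasis k) :=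
          fun k => by rw [hGq]; positivity
        have hpair : ea^2 + eb^2 = ∑ k ∈ ({i1, j1} : Finset (Fin m)),
            ⇑(hB'sym.eigenvectorBasis k) ⬝ᵥ G *ᵥ ⇑(hB'sym.eigenvectorBasis k) := by
          rw [Finset.sum_pair hij]
          rw [show (⇑(hB'sym.eigenvectorBasis i1) : Fin m → ℝ) = v from rfl,
            show (⇑(hB'sym.eigenvectorBasis j1) : Fin m → ℝ) = w from rfl, hGq, hGq]
        calc ea^2 + eb^2
            = ∑ k ∈ ({i1, j1} : Finset (Fin m)),
              ⇑(hB'sym.eigenvectorBasis k) ⬝ᵥ G *ᵥ ⇑(hB'sym.eigenvectorBasis k) := hpair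
          _ ≤ ∑ k, ⇑(hB'sym.eigenvectorBasis k) ⬝ᵥ G *ᵥ ⇑(hB'sym.eigenvectorBasis k) :=
              Finset.sum_le_sum_of_subset_of_nonneg (Finset.subset_univ _)
                (fun k _ _ => hterm k)
          _ = E^2 := by rw [hsum, hdiag]
      have hkey := key_ineq sa sb ea eb hsa_pos hsab hea_nn heb_nn
        (fro_to_quarter hfro hEsa hEnn)
      have hineq : lamMax B' * lamMin B ≤ 8 * lamMax B * lamMin B' := by
        rw [hlam'v, hΛ'w, ← hsa2, ← hsb2]
        have h0 : 0 ≤ sa - ea := le_trans (by positivity) hsaea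
        have h1 : ‖∑ i, w i • χ' i‖^2 ≤ (sb+eb)^2 := pow_le_pow_left₀ (norm_nonneg _) htri_w 2
        have h2 : (sa-ea)^2 ≤ ‖∑ i, v i • χ' i‖^2 := pow_le_pow_left₀ h0 htri_v 2
        calc ‖∑ i, w i • χ' i‖^2 * sa^2
            ≤ (sb+eb)^2 * sa^2 := mul_le_mul_of_nonneg_right h1 (sq_nonneg sa)
          _ ≤ 8*sb^2*(sa-ea)^2 := hkey
          _ ≤ 8*sb^2*‖∑ i, v i • χ' i‖^2 := mul_le_mul_of_nonneg_left h2 (by positivity)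
      rw [show 8 * (lamMax B / lamMin B) = (8 * lamMax B) / lamMin B by ring,
        div_le_div_iff₀ hlam'pos hlpos]
      exact hineq
  · -- Part 2
    have hquadD : ∀ x : Fin m → ℝ, |x ⬝ᵥ (B - B') *ᵥ x| ≤ ((2*sb + E)*E) * (x ⬝ᵥ x) := by
      intro x
      have hsub : x ⬝ᵥ (B - B') *ᵥ x = x ⬝ᵥ B *ᵥ x - x ⬝ᵥ B' *ᵥ x := by
        rw [Matrix.sub_mulVec, dotProduct_sub]
      set n := Real.sqrt (x ⬝ᵥ x) with hn_def
      have hn2 : n^2 = x ⬝ᵥ x := Real.sq_sqrt (dot_self_nonneg x)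
      have hnn : (0:ℝ) ≤ n := Real.sqrt_nonneg _
      have haub : ‖∑ i, x i • χ i‖ ≤ sb * n := by
        have h1 := quad_le_lamMax hm hBsym x
        rw [qB] at h1
        have h2 : ‖∑ i, x i • χ i‖^2 ≤ (sb*n)^2 := by rw [mul_pow, hsb2, hn2]; exact h1
        exact le_of_sq_le_sq'' (norm_nonneg _) (mul_nonneg hsb_pos.le hnn) h2
      have hde : ‖∑ i, x i • (χ i - χ' i)‖ ≤ E * n := by
        have h1 := hdbound x
        have h2 : ‖∑ i, x i • (χ i - χ' i)‖^2 ≤ (E*n)^2 := by rw [mul_pow, hn2]; exact h1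
        exact le_of_sq_le_sq'' (norm_nonneg _) (mul_nonneg hEnn hnn) h2
      have htri : |‖∑ i, x i • χ i‖ - ‖∑ i, x i • χ' i‖| ≤ ‖∑ i, x i • (χ i - χ' i)‖ := by
        rw [hdiffu]
        exact abs_norm_sub_norm_le _ _
      rw [hsub, qB, qB', abs_le]
      rw [abs_le] at htri
      obtain ⟨ht1, ht2⟩ := htri
      have hx2 : x ⬝ᵥ x = n^2 := hn2.symm
      rw [hx2]
      exact abs_diff_sq_le (norm_nonneg _) (norm_nonneg _) (norm_nonneg _) ht1 ht2 haub hde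
        hEnn hsb_pos.le hnn
    have hsbE : (2*sb + E)*E ≤ 3*sb*E := sbE_bound hEsa hsab hEnn hsa_pos
    have hDsym : (B - B').IsHermitian := hBsym.sub hB'sym
    have habsD : ∀ k, |hDsym.eigenvalues k| ≤ (2*sb+E)*E := abs_eigen_le_of_quad hDsym hquadD
    have hsqD : ∀ x : Fin m → ℝ,
        ((B-B') *ᵥ x) ⬝ᵥ ((B-B') *ᵥ x) ≤ (((2*sb+E)*E))^2 * (x ⬝ᵥ x) :=
      sq_norm_mulVec_le hDsym (herm_rep hDsym) habsD
    apply specNorm_le_of_sq (by positivity)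
    intro x
    refine (hsqD x).trans ?_
    apply mul_le_mul_of_nonneg_right _ (dot_self_nonneg x)
    have h0 : 0 ≤ (2*sb+E)*E := mul_nonneg (by positivity) hEnn
    exact pow_le_pow_left₀ h0 hsbE 2
  · -- Part 3
    have hBeig : ∀ k, lamMin B ≤ hBsym.eigenvalues k := fun k => hmin_eq ▸ hmin_le k
    have hB'eig : ∀ k, lamMin B' ≤ hB'sym.eigenvalues k := fun k => hmin'_eq ▸ hmin'_le k
    obtain ⟨hBinv_rep, hBmul, hBinvmul⟩ :=
      inv_rep hBsym (fun k => (lt_of_lt_of_le hlpos (hBeig k)).ne')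
    obtain ⟨hB'inv_rep, hB'mul, hB'invmul⟩ :=
      inv_rep hB'sym (fun k => (lt_of_lt_of_le hlam'pos (hB'eig k)).ne')
    have hsqBinv : ∀ x : Fin m → ℝ,
        (B⁻¹ *ᵥ x) ⬝ᵥ (B⁻¹ *ᵥ x) ≤ ((lamMin B)⁻¹)^2 * (x ⬝ᵥ x) := by
      refine sq_norm_mulVec_le hBsym hBinv_rep (fun k => ?_)
      rw [abs_inv, abs_of_pos (lt_of_lt_of_le hlpos (hBeig k))]
      exact inv_anti₀ hlpos (hBeig k)
    have hsqB'inv : ∀ x : Fin m → ℝ,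
        (B'⁻¹ *ᵥ x) ⬝ᵥ (B'⁻¹ *ᵥ x) ≤ ((lamMin B')⁻¹)^2 * (x ⬝ᵥ x) := by
      refine sq_norm_mulVec_le hB'sym hB'inv_rep (fun k => ?_)
      rw [abs_inv, abs_of_pos (lt_of_lt_of_le hlam'pos (hB'eig k))]
      exact inv_anti₀ hlam'pos (hB'eig k)
    -- quad bound for B - B' (as in part 2)
    have hquadD : ∀ x : Fin m → ℝ, |x ⬝ᵥ (B - B') *ᵥ x| ≤ ((2*sb + E)*E) * (x ⬝ᵥ x) := by
      intro x
      have hsub : x ⬝ᵥ (B - B') *ᵥ x = x ⬝ᵥ B *ᵥ x - x ⬝ᵥ B' *ᵥ x := by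
        rw [Matrix.sub_mulVec, dotProduct_sub]
      set n := Real.sqrt (x ⬝ᵥ x) with hn_def
      have hn2 : n^2 = x ⬝ᵥ x := Real.sq_sqrt (dot_self_nonneg x)
      have hnn : (0:ℝ) ≤ n := Real.sqrt_nonneg _
      have haub : ‖∑ i, x i • χ i‖ ≤ sb * n := by
        have h1 := quad_le_lamMax hm hBsym x
        rw [qB] at h1
        have h2 : ‖∑ i, x i • χ i‖^2 ≤ (sb*n)^2 := by rw [mul_pow, hsb2, hn2]; exact h1
        exact le_of_sq_le_sq'' (norm_nonneg _) (mul_nonneg hsb_pos.le hnn) h2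
      have hde : ‖∑ i, x i • (χ i - χ' i)‖ ≤ E * n := by
        have h1 := hdbound x
        have h2 : ‖∑ i, x i • (χ i - χ' i)‖^2 ≤ (E*n)^2 := by rw [mul_pow, hn2]; exact h1
        exact le_of_sq_le_sq'' (norm_nonneg _) (mul_nonneg hEnn hnn) h2
      have htri : |‖∑ i, x i • χ i‖ - ‖∑ i, x i • χ' i‖| ≤ ‖∑ i, x i • (χ i - χ' i)‖ := by
        rw [hdiffu]
        exact abs_norm_sub_norm_le _ _
      rw [hsub, qB, qB', abs_le]
      rw [abs_le] at htri
      obtain ⟨ht1, ht2⟩ := htri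
      have hx2 : x ⬝ᵥ x = n^2 := hn2.symm
      rw [hx2]
      exact abs_diff_sq_le (norm_nonneg _) (norm_nonneg _) (norm_nonneg _) ht1 ht2 haub hde
        hEnn hsb_pos.le hnn
    have hDsym : (B - B').IsHermitian := hBsym.sub hB'sym
    have habsD : ∀ k, |hDsym.eigenvalues k| ≤ (2*sb+E)*E := abs_eigen_le_of_quad hDsym hquadD
    have hsqD : ∀ x : Fin m → ℝ,
        ((B-B') *ᵥ x) ⬝ᵥ ((B-B') *ᵥ x) ≤ (((2*sb+E)*E))^2 * (x ⬝ᵥ x) :=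
      sq_norm_mulVec_le hDsym (herm_rep hDsym) habsD
    have hid : B⁻¹ - B'⁻¹ = B⁻¹ * (B' - B) * B'⁻¹ := by
      calc B⁻¹ - B'⁻¹ = B⁻¹ * (B' * B'⁻¹) - (B⁻¹ * B) * B'⁻¹ := by
            rw [hB'mul, hBinvmul, Matrix.mul_one, Matrix.one_mul]
        _ = B⁻¹ * (B' - B) * B'⁻¹ := by
            rw [Matrix.mul_sub, Matrix.sub_mul]
            simp only [Matrix.mul_assoc]
    have hsbE : (2*sb + E)*E ≤ 3*sb*E := sbE_bound hEsa hsab hEnn hsa_pos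
    have hKnn : (0:ℝ) ≤ 12 * sb * E / (lamMin B)^2 := by positivity
    apply specNorm_le_of_sq hKnn
    intro x
    have hx1 : (B⁻¹ - B'⁻¹) *ᵥ x = B⁻¹ *ᵥ ((B' - B) *ᵥ (B'⁻¹ *ᵥ x)) := by
      rw [hid, ← Matrix.mulVec_mulVec, ← Matrix.mulVec_mulVec]
    have hnegD : ∀ z : Fin m → ℝ,
        ((B' - B) *ᵥ z) ⬝ᵥ ((B' - B) *ᵥ z) = ((B - B') *ᵥ z) ⬝ᵥ ((B - B') *ᵥ z) := by
      intro z
      have hzz : (B' - B) *ᵥ z = -((B - B') *ᵥ z) := by rw [← Matrix.neg_mulVec, neg_sub]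
      rw [hzz, dotProduct_neg, neg_dotProduct, neg_neg]
    set z := B'⁻¹ *ᵥ x with hz_def
    set yy := (B' - B) *ᵥ z with hyy_def
    have hc1 : ((B⁻¹ - B'⁻¹) *ᵥ x) ⬝ᵥ ((B⁻¹ - B'⁻¹) *ᵥ x) = (B⁻¹ *ᵥ yy) ⬝ᵥ (B⁻¹ *ᵥ yy) := by
      rw [hx1]
    have hc2 : (B⁻¹ *ᵥ yy) ⬝ᵥ (B⁻¹ *ᵥ yy) ≤ ((lamMin B)⁻¹)^2 * (yy ⬝ᵥ yy) := hsqBinv yy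
    have hc3 : yy ⬝ᵥ yy ≤ ((2*sb+E)*E)^2 * (z ⬝ᵥ z) := by
      rw [hyy_def, hnegD z]
      exact hsqD z
    have hc4 : z ⬝ᵥ z ≤ ((lamMin B')⁻¹)^2 * (x ⬝ᵥ x) := hsqB'inv x
    have hinv' : (lamMin B')⁻¹ ≤ 4 / lamMin B := by
      rw [div_eq_mul_inv]
      calc (lamMin B')⁻¹ ≤ (lamMin B / 4)⁻¹ :=
            inv_anti₀ (by positivity) hlam'q
        _ = 4 * (lamMin B)⁻¹ := by rw [div_eq_mul_inv, mul_inv, inv_inv, mul_comm]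
    have hscalar : ((lamMin B)⁻¹) * ((2*sb+E)*E) * ((lamMin B')⁻¹) ≤ 12 * sb * E / (lamMin B)^2 := by
      have hs1 : ((lamMin B)⁻¹) * ((2*sb+E)*E) * ((lamMin B')⁻¹)
          ≤ ((lamMin B)⁻¹) * (3*sb*E) * (4 / lamMin B) := by
        have e1 : 0 ≤ (lamMin B)⁻¹ := by positivity
        have e2 : 0 ≤ (2*sb+E)*E := mul_nonneg (by positivity) hEnn
        have e3 : 0 ≤ (lamMin B')⁻¹ := by positivity
        have e4 : 0 ≤ (lamMin B)⁻¹ * (3*sb*E) := by positivity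
        calc ((lamMin B)⁻¹) * ((2*sb+E)*E) * ((lamMin B')⁻¹)
            ≤ ((lamMin B)⁻¹) * (3*sb*E) * ((lamMin B')⁻¹) := by
              apply mul_le_mul_of_nonneg_right _ e3
              exact mul_le_mul_of_nonneg_left hsbE e1
          _ ≤ ((lamMin B)⁻¹) * (3*sb*E) * (4 / lamMin B) :=
              mul_le_mul_of_nonneg_left hinv' e4
      refine hs1.trans (le_of_eq ?_)
      field_simp
      ring
    have hscalar_nn : 0 ≤ ((lamMin B)⁻¹) * ((2*sb+E)*E) * ((lamMin B')⁻¹) := by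
      have e2 : 0 ≤ (2*sb+E)*E := mul_nonneg (by positivity) hEnn
      positivity
    calc ((B⁻¹ - B'⁻¹) *ᵥ x) ⬝ᵥ ((B⁻¹ - B'⁻¹) *ᵥ x)
        = (B⁻¹ *ᵥ yy) ⬝ᵥ (B⁻¹ *ᵥ yy) := hc1
      _ ≤ ((lamMin B)⁻¹)^2 * (yy ⬝ᵥ yy) := hc2
      _ ≤ ((lamMin B)⁻¹)^2 * (((2*sb+E)*E)^2 * (z ⬝ᵥ z)) := by
          apply mul_le_mul_of_nonneg_left hc3 (by positivity)
      _ ≤ ((lamMin B)⁻¹)^2 * (((2*sb+E)*E)^2 * (((lamMin B')⁻¹)^2 * (x ⬝ᵥ x))) := by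
          apply mul_le_mul_of_nonneg_left _ (by positivity)
          apply mul_le_mul_of_nonneg_left hc4 (by positivity)
      _ = (((lamMin B)⁻¹) * ((2*sb+E)*E) * ((lamMin B')⁻¹))^2 * (x ⬝ᵥ x) := by ring
      _ ≤ (12 * sb * E / (lamMin B)^2)^2 * (x ⬝ᵥ x) := by
          apply mul_le_mul_of_nonneg_right _ (dot_self_nonneg x)
          exact pow_le_pow_left₀ hscalar_nn hscalar 2
end
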